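/- arXiv:math/0512004 — 5 statements merged into one kernel-verified Lean document; each statement's English description precedes it below -/
import Mathlib

section
/- If n ≥ k(k+1) and (k+1) divides n, then the chromatic number of the k-th power of the cycle on n vertices equals k+1. -/
open Filter Finset

/-- Cyclic distance between residues `i, j` (given as naturals `< n`) on an `n`-cycle. -/
def cycleDist (n i j : ℕ) : ℕ := min ((i + n - j) % n) ((j + n - i) % n)

/-- `C_n^k`: the `k`-th power of the cycle on `n` vertices. -/
def cyclePower (n k : ℕ) : SimpleGraph (Fin n) where
  Adj i j := i ≠ j ∧ cycleDist n i.val j.val ≤ k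
  symm := by
    constructor
    intro i j h
    refine ⟨h.1.symm, ?_⟩
    have h2 := h.2
    unfold cycleDist at h2 ⊢
    omega
  loopless := by constructor; intro i h; exact h.1 rfl

instance cyclePowerDecidable (n k : ℕ) : DecidableRel (cyclePower n k).Adj :=
  fun i j => inferInstanceAs (Decidable (i ≠ j ∧ cycleDist n i.val j.val ≤ k))

/-- The vertex `i` steps after `a` along the cycle. -/
def rot {n : ℕ} (a : Fin n) (i : ℕ) : Fin n := a + ⟨i % n, Nat.mod_lt i a.pos⟩

/-- All assignments of `c`-element lists (from a colour set of size `s`) to vertices. -/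
def allLists (V : Type) [Fintype V] [DecidableEq V] (s c : ℕ) :
    Finset (V → Finset (Fin s)) :=
  Finset.univ.filter fun L => ∀ v, (L v).card = c

open scoped Classical in
/-- Probability of an event `P` under uniform i.i.d. random `c`-lists. -/
noncomputable def probEvent (V : Type) [Fintype V] [DecidableEq V] (s c : ℕ)
    (P : (V → Finset (Fin s)) → Prop) : ℝ :=
  (((allLists V s c).filter P).card : ℝ) / ((allLists V s c).card : ℝ)

/-- `G` admits a proper colouring from the lists `L`. -/
def colourable {V : Type} {s : ℕ} (G : SimpleGraph V) (L : V → Finset (Fin s)) : Prop :=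
  ∃ f : V → Fin s, (∀ v, f v ∈ L v) ∧ ∀ ⦃v w⦄, G.Adj v w → f v ≠ f w

open Asymptotics

/-- Number of (c+1)-cliques of `C_n^k` all of whose vertices got the same list. -/
def numCliquesSame (n k s c : ℕ) (L : Fin n → Finset (Fin s)) : ℕ :=
  (((cyclePower n k).cliqueFinset (c+1)).filter
    (fun S => ∀ v ∈ S, ∀ w ∈ S, L v = L w)).card

/-- Expected number of (c+1)-cliques of `C_n^k` with all lists equal. -/
noncomputable def expCliquesSame (n k s c : ℕ) : ℝ :=
  (∑ L ∈ allLists (Fin n) s c, (numCliquesSame n k s c L : ℝ)) /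
    ((allLists (Fin n) s c).card : ℝ)


lemma aux_dist (n k i j : ℕ) (hdvd : (k+1) ∣ n) (hi : i < n) (hj : j < n)
    (hne : i ≠ j) (hmod : i % (k+1) = j % (k+1)) (h1 : (i + n - j) % n ≤ k) : False := by
  have hjle : j ≤ i + n := by omega
  have hn0 : n % (k+1) = 0 := Nat.dvd_iff_mod_eq_zero.mp hdvd
  have hd : (k+1) ∣ (i + n - j) := by
    have hmodn : j ≡ i + n [MOD k+1] := by
      show j % (k+1) = (i + n) % (k+1)
      simp [Nat.add_mod, hn0, hmod]
    exact (Nat.modEq_iff_dvd' hjle).mp hmodn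
  have hd' : (k+1) ∣ ((i + n - j) % n) := (Nat.dvd_mod_iff hdvd).mpr hd
  have hz : (i + n - j) % n = 0 := by
    rcases Nat.eq_zero_or_pos ((i + n - j) % n) with h | h
    · exact h
    · exact absurd (Nat.le_of_dvd h hd') (by omega)
  have hnd : n ∣ (i + n - j) := Nat.dvd_of_mod_eq_zero hz
  obtain ⟨q, hq⟩ := hnd
  have hn0 : 0 < n := by omega
  rcases q with _ | _ | q
  · omega
  · omega
  · have : 2 * n ≤ n * (q + 1 + 1) := by nlinarith
    omega

lemma not_adj_same_mod (n k i j : ℕ) (hdvd : (k+1) ∣ n) (hi : i < n) (hj : j < n)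
    (hne : i ≠ j) (hmod : i % (k+1) = j % (k+1)) : ¬ cycleDist n i j ≤ k := by
  intro h
  unfold cycleDist at h
  rcases Nat.le_total ((i + n - j) % n) ((j + n - i) % n) with hle | hle
  · exact aux_dist n k i j hdvd hi hj hne hmod (by omega)
  · exact aux_dist n k j i hdvd hj hi hne.symm hmod.symm (by omega)

theorem chromaticNumber_cyclePower_of_dvd (n k : ℕ) (hk : 1 ≤ k)
    (hn : k * (k+1) ≤ n) (hdvd : (k+1) ∣ n) :
    (cyclePower n k).chromaticNumber = (k + 1 : ℕ∞) := by
  have hn0 : k + 1 ≤ n := by nlinarith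
  -- upper bound
  have hcol : (cyclePower n k).Colorable (k+1) := by
    refine ⟨SimpleGraph.Coloring.mk (fun i => ⟨i.val % (k+1), Nat.mod_lt _ (by omega)⟩) ?_⟩
    intro v w hadj hfeq
    have hmod : v.val % (k+1) = w.val % (k+1) := by
      simpa [Fin.ext_iff] using hfeq
    have hne : v.val ≠ w.val := fun h => hadj.1 (Fin.ext h)
    exact not_adj_same_mod n k v.val w.val hdvd v.isLt w.isLt hne hmod hadj.2
  have hub : (cyclePower n k).chromaticNumber ≤ (k+1 : ℕ) :=
    hcol.chromaticNumber_le
  -- lower bound: clique {0,...,k}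
  have hlb : ((k+1 : ℕ) : ℕ∞) ≤ (cyclePower n k).chromaticNumber := by
    set s : Finset (Fin n) :=
      (Finset.range (k+1)).image (fun i => (⟨i % n, Nat.mod_lt i (by omega)⟩ : Fin n)) with hs
    have hclique : (cyclePower n k).IsClique s := by
      intro a ha b hb hab
      simp only [hs, Finset.mem_image, Finset.mem_range, Finset.mem_coe] at ha hb
      obtain ⟨x, hx, rfl⟩ := ha
      obtain ⟨y, hy, rfl⟩ := hb
      have hxn : x % n = x := Nat.mod_eq_of_lt (by omega)
      have hyn : y % n = y := Nat.mod_eq_of_lt (by omega)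
      refine ⟨hab, ?_⟩
      simp only [hxn, hyn]
      unfold cycleDist
      rcases Nat.le_total x y with hle | hle
      · have : (y + n - x) % n = y - x := by
          have : y + n - x = (y - x) + n := by omega
          rw [this, Nat.add_mod_right, Nat.mod_eq_of_lt (by omega)]
        calc min ((x + n - y) % n) ((y + n - x) % n) ≤ (y + n - x) % n := min_le_right _ _
          _ ≤ k := by omega
      · have : (x + n - y) % n = x - y := by
          have : x + n - y = (x - y) + n := by omega
          rw [this, Nat.add_mod_right, Nat.mod_eq_of_lt (by omega)]
        calc min ((x + n - y) % n) ((y + n - x) % n) ≤ (x + n - y) % n := min_le_left _ _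
          _ ≤ k := by omega
    have hcard : s.card = k + 1 := by
      rw [hs, Finset.card_image_of_injOn, Finset.card_range]
      intro x hx y hy hxy
      simp only [Finset.coe_range, Set.mem_Iio] at hx hy
      have : x % n = y % n := by simpa [Fin.ext_iff] using hxy
      rwa [Nat.mod_eq_of_lt (by omega), Nat.mod_eq_of_lt (by omega)] at this
    have := hclique.card_le_chromaticNumber
    rwa [hcard] at this
  exact le_antisymm (by exact_mod_cast hub) hlb
end

section
/- If n ≥ k(k+1) and (k+1) does not divide n, then the chromatic number of the k-th power of the cycle on n vertices equals k+2. -/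
open Filter Finset

open Asymptotics

/-- The colouring function: blocks of size `k+2` (first `r` of them) then blocks of size `k+1`. -/
def colF (k r i : ℕ) : ℕ :=
  if i < r*(k+2) then i % (k+2) else (i - r*(k+2)) % (k+1)

lemma colF_lt (k r i : ℕ) : colF k r i < k + 2 := by
  unfold colF
  split
  · exact Nat.mod_lt _ (by omega)
  · have := Nat.mod_lt (i - r*(k+2)) (show 0 < k+1 by omega)
    omega

lemma colF_spec (k r q i : ℕ) (hrq : r ≤ q) (hi : i < q*(k+1) + r) :
    ∃ b, b < q ∧ i = b*(k+1) + min b r + colF k r i := by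
  unfold colF
  split
  · rename_i h
    refine ⟨i/(k+2), ?_, ?_⟩
    · have hb : i/(k+2) < r := Nat.div_lt_of_lt_mul (by linarith [h, Nat.mul_comm r (k+2)])
      omega
    · have hb : i/(k+2) < r := Nat.div_lt_of_lt_mul (by linarith [h, Nat.mul_comm r (k+2)])
      have h2 := Nat.div_add_mod i (k+2)
      have hcomm : (k+2) * (i/(k+2)) = (i/(k+2))*(k+2) := Nat.mul_comm _ _
      have hmin : min (i/(k+2)) r = i/(k+2) := by omega
      have hring : (i/(k+2))*(k+2) = (i/(k+2))*(k+1) + i/(k+2) := by ring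
      rw [hmin]
      omega
  · rename_i h
    push_neg at h
    set j := i - r*(k+2) with hj
    refine ⟨r + j/(k+1), ?_, ?_⟩
    · have h2 := Nat.div_add_mod j (k+1)
      have hcomm : (k+1) * (j/(k+1)) = (j/(k+1))*(k+1) := Nat.mul_comm _ _
      have hm := Nat.mod_lt j (show 0 < k+1 by omega)
      by_contra hb
      push_neg at hb
      have : q*(k+1) ≤ (r + j/(k+1))*(k+1) := Nat.mul_le_mul_right _ hb
      have hexp : (r + j/(k+1))*(k+1) = r*(k+1) + (j/(k+1))*(k+1) := by ring
      have hexp2 : r*(k+2) = r*(k+1) + r := by ring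
      omega
    · have h2 := Nat.div_add_mod j (k+1)
      have hcomm : (k+1) * (j/(k+1)) = (j/(k+1))*(k+1) := Nat.mul_comm _ _
      have hmin : min (r + j/(k+1)) r = r := min_eq_right (Nat.le_add_right r _)
      have hexp : (r + j/(k+1))*(k+1) = r*(k+1) + (j/(k+1))*(k+1) := by ring
      have hexp2 : r*(k+2) = r*(k+1) + r := by ring
      rw [hmin]
      omega

lemma colF_gap (k r q u v : ℕ) (hrq : r ≤ q)
    (hu : u < q*(k+1) + r) (hv : v < q*(k+1) + r) (huv : u < v)
    (h : colF k r u = colF k r v) :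
    u + (k+1) ≤ v ∧ v + (k+1) ≤ u + q*(k+1) + r := by
  obtain ⟨b1, hb1, e1⟩ := colF_spec k r q u hrq hu
  obtain ⟨b2, hb2, e2⟩ := colF_spec k r q v hrq hv
  rw [h] at e1
  rcases lt_trichotomy b1 b2 with h12 | h12 | h12
  · have m1 : b1*(k+1) + (k+1) ≤ b2*(k+1) := by
      calc b1*(k+1) + (k+1) = (b1+1)*(k+1) := by ring
      _ ≤ b2*(k+1) := Nat.mul_le_mul_right _ h12
    have m2 : b2*(k+1) + (k+1) ≤ q*(k+1) := by
      calc b2*(k+1) + (k+1) = (b2+1)*(k+1) := by ring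
      _ ≤ q*(k+1) := Nat.mul_le_mul_right _ hb2
    have mm : min b1 r ≤ min b2 r := min_le_min (le_of_lt h12) le_rfl
    have mr : min b2 r ≤ r := min_le_right _ _
    constructor
    · linarith
    · linarith [Nat.zero_le (b1*(k+1)), Nat.zero_le (b1 ⊓ r)]
  · subst h12
    exfalso; linarith [e1, e2]
  · exfalso
    have m1 : b2*(k+1) + (k+1) ≤ b1*(k+1) := by
      calc b2*(k+1) + (k+1) = (b2+1)*(k+1) := by ring
      _ ≤ b1*(k+1) := Nat.mul_le_mul_right _ h12
    have mm : min b2 r ≤ min b1 r := min_le_min (le_of_lt h12) le_rfl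
    linarith

lemma mod_cases' (a n : ℕ) (hn : 0 < n) (h : a < 2*n) : a % n = a ∨ (a % n) + n = a := by
  rcases Nat.lt_or_ge a n with h' | h'
  · left; exact Nat.mod_eq_of_lt h'
  · right
    rw [Nat.mod_eq_sub_mod h', Nat.mod_eq_of_lt (by omega)]
    omega

/-- An independent set in `C_n^k` has at most `n/(k+1)` elements. -/
lemma indep_card_le (n k : ℕ) (hkn : k < n) (S : Finset (Fin n))
    (hS : ∀ u ∈ S, ∀ v ∈ S, u ≠ v → ¬ (cyclePower n k).Adj u v) :
    S.card * (k+1) ≤ n := by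
  have hn0 : 0 < n := by omega
  classical
  have key : ∀ p ∈ S ×ˢ (Finset.univ : Finset (Fin (k+1))),
      (⟨(p.1.val + p.2.val) % n, Nat.mod_lt _ hn0⟩ : Fin n) ∈ (Finset.univ : Finset (Fin n)) :=
    fun _ _ => Finset.mem_univ _
  have inj : Set.InjOn (fun p : Fin n × Fin (k+1) =>
      (⟨(p.1.val + p.2.val) % n, Nat.mod_lt _ hn0⟩ : Fin n))
      ↑(S ×ˢ (Finset.univ : Finset (Fin (k+1)))) := by
    rintro ⟨v, t⟩ hvt ⟨w, s⟩ hws heq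
    rw [Finset.mem_coe, Finset.mem_product] at hvt hws
    have hvS : v ∈ S := hvt.1
    have hwS : w ∈ S := hws.1
    have heq' : (v.val + t.val) % n = (w.val + s.val) % n := by
      simpa using congrArg Fin.val heq
    have hv := v.isLt
    have hw := w.isLt
    have ht := t.isLt
    have hs := s.isLt
    have hvw : v = w := by
      by_contra hne
      refine hS v hvS w hwS hne ⟨hne, ?_⟩
      unfold cycleDist
      have hvwne : v.val ≠ w.val := fun hh => hne (Fin.ext hh)
      have hX : (v.val + n - w.val) % n < n := Nat.mod_lt _ hn0
      have hY : (w.val + n - v.val) % n < n := Nat.mod_lt _ hn0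
      have hA : (v.val + t.val) % n < n := Nat.mod_lt _ hn0
      have hB : (w.val + s.val) % n < n := Nat.mod_lt _ hn0
      rcases mod_cases' (v.val + t.val) n hn0 (by omega) with h1 | h1 <;>
        rcases mod_cases' (w.val + s.val) n hn0 (by omega) with h2 | h2 <;>
        rcases mod_cases' (v.val + n - w.val) n hn0 (by omega) with h3 | h3 <;>
        rcases mod_cases' (w.val + n - v.val) n hn0 (by omega) with h4 | h4 <;>
        omega
    subst hvw
    have hts : t.val = s.val := by
      have hA : (v.val + t.val) % n < n := Nat.mod_lt _ hn0
      have hB : (v.val + s.val) % n < n := Nat.mod_lt _ hn0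
      rcases mod_cases' (v.val + t.val) n hn0 (by omega) with h1 | h1 <;>
      rcases mod_cases' (v.val + s.val) n hn0 (by omega) with h2 | h2 <;>
      omega
    exact Prod.ext rfl (Fin.ext hts)
  have hcard := Finset.card_le_card_of_injOn _ key inj
  rw [Finset.card_product, Finset.card_univ, Fintype.card_fin] at hcard
  simpa using hcard

theorem chromaticNumber_cyclePower_of_not_dvd (n k : ℕ) (hk : 1 ≤ k)
    (hn : k * (k+1) ≤ n) (hdvd : ¬ (k+1) ∣ n) :
    (cyclePower n k).chromaticNumber = (k + 2 : ℕ∞) := by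
  classical
  set r := n % (k+1) with hr
  set q := n / (k+1) with hq
  have hdm : q * (k+1) + r = n := by
    rw [hq, hr, Nat.mul_comm]; exact Nat.div_add_mod n (k+1)
  have hr1 : 1 ≤ r := by
    rcases Nat.eq_zero_or_pos r with h0 | h0
    · exfalso; exact hdvd ⟨q, by omega⟩
    · exact h0
  have hrk : r ≤ k := by
    have := Nat.mod_lt n (show 0 < k+1 by omega)
    omega
  have hkq : k ≤ q := by
    by_contra hb
    push_neg at hb
    have h1 : q * (k+1) ≤ (k-1) * (k+1) := Nat.mul_le_mul_right _ (by omega)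
    have h2 : (k-1) * (k+1) + (k+1) = k * (k+1) := by
      have : k - 1 + 1 = k := by omega
      calc (k-1)*(k+1) + (k+1) = (k-1+1)*(k+1) := by ring
      _ = k*(k+1) := by rw [this]
    omega
  have hkn : k < n := by nlinarith
  have hn0 : 0 < n := by omega
  -- Upper bound: an explicit (k+2)-colouring
  have hcol : (cyclePower n k).Colorable (k+2) := by
    refine ⟨SimpleGraph.Coloring.mk
      (fun v => (⟨colF k r v.val, colF_lt k r v.val⟩ : Fin (k+2))) ?_⟩
    intro u v hadj heq
    obtain ⟨hne, hdist⟩ := hadj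
    have hceq : colF k r u.val = colF k r v.val := by
      simpa [Fin.ext_iff] using heq
    have hu := u.isLt
    have hv := v.isLt
    have hneval : u.val ≠ v.val := fun hh => hne (Fin.ext hh)
    unfold cycleDist at hdist
    have hX : (u.val + n - v.val) % n < n := Nat.mod_lt _ hn0
    have hY : (v.val + n - u.val) % n < n := Nat.mod_lt _ hn0
    rcases Nat.lt_or_ge u.val v.val with hlt | hge
    · obtain ⟨g1, g2⟩ := colF_gap k r q u.val v.val (by omega) (by omega) (by omega) hlt hceq
      rcases mod_cases' (u.val + n - v.val) n hn0 (by omega) with h3 | h3 <;>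
      rcases mod_cases' (v.val + n - u.val) n hn0 (by omega) with h4 | h4 <;>
      omega
    · have hlt : v.val < u.val := by omega
      obtain ⟨g1, g2⟩ := colF_gap k r q v.val u.val (by omega) (by omega) (by omega) hlt hceq.symm
      rcases mod_cases' (u.val + n - v.val) n hn0 (by omega) with h3 | h3 <;>
      rcases mod_cases' (v.val + n - u.val) n hn0 (by omega) with h4 | h4 <;>
      omega
  -- Lower bound: not (k+1)-colourable
  have hncol : ¬ (cyclePower n k).Colorable (k+1) := by
    rintro ⟨C⟩
    have hmaps : ∀ a ∈ (Finset.univ : Finset (Fin n)), C a ∈ (Finset.univ : Finset (Fin (k+1))) :=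
      fun _ _ => Finset.mem_univ _
    have hlt : (Finset.univ : Finset (Fin (k+1))).card * q < (Finset.univ : Finset (Fin n)).card := by
      rw [Finset.card_univ, Finset.card_univ, Fintype.card_fin, Fintype.card_fin]
      have hc' : (k+1)*q = q*(k+1) := Nat.mul_comm _ _
      omega
    obtain ⟨c, _, hc⟩ := Finset.exists_lt_card_fiber_of_mul_lt_card_of_maps_to hmaps hlt
    set S := Finset.univ.filter (fun x => C x = c) with hS
    have hind : ∀ u ∈ S, ∀ v ∈ S, u ≠ v → ¬ (cyclePower n k).Adj u v := by
      intro u huS v hvS hne hadj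
      have hu : C u = c := (Finset.mem_filter.mp huS).2
      have hv : C v = c := (Finset.mem_filter.mp hvS).2
      exact C.valid hadj (hu.trans hv.symm)
    have hbound := indep_card_le n k hkn S hind
    have hScard : q + 1 ≤ S.card := hc
    have : (q+1) * (k+1) ≤ S.card * (k+1) := Nat.mul_le_mul_right _ hScard
    have hexp : (q+1) * (k+1) = q*(k+1) + (k+1) := by ring
    omega
  -- Conclude
  refine le_antisymm ?_ ?_
  · have := hcol.chromaticNumber_le
    simpa using this
  · by_contra hlt
    push_neg at hlt
    have : (cyclePower n k).chromaticNumber ≤ (k+1 : ℕ) := by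
      have h1 : (cyclePower n k).chromaticNumber < ((k+2 : ℕ) : ℕ∞) := by
        simpa using hlt
      have h2 : ((k+1 : ℕ) : ℕ∞) + 1 = ((k+2 : ℕ) : ℕ∞) := by
        push_cast; ring
      exact Order.le_of_lt_add_one (by rw [h2]; exact h1)
    exact hncol (SimpleGraph.chromaticNumber_le_iff_colorable.mp this)
end

section
/- Let G be a graph with a list assignment L giving each vertex a list of size c. Suppose (a) for every set X of at least c+2 vertices, the union of the lists of X has size at least |X|, and (b) no clique of size c+1 has all its vertices assigned the same list. Then G is L-colourable. -/
open Filter Finset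

open Asymptotics

theorem list_colouring_of_expanding_lists (V : Type) [Fintype V] [DecidableEq V]
    (G : SimpleGraph V) (c : ℕ) (L : V → Finset ℕ) (hsize : ∀ v, (L v).card = c)
    (ha : ∀ X : Finset V, c + 2 ≤ X.card → X.card ≤ (X.biUnion L).card)
    (hb : ∀ S : Finset V, G.IsClique S → S.card = c + 1 →
      ¬ ∃ A : Finset ℕ, ∀ v ∈ S, L v = A) :
    ∃ f : V → ℕ, (∀ v, f v ∈ L v) ∧ ∀ ⦃v w⦄, G.Adj v w → f v ≠ f w := by
  classical
  -- the class of a list `A`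
  set cls : Finset ℕ → Finset V := fun A => univ.filter (fun u => L u = A) with hcls
  have hmemcls : ∀ {A u}, u ∈ cls A ↔ L u = A := by
    intro A u; simp [hcls]
  -- each class has size at most c+1
  have hclscard : ∀ A, (cls A).card ≤ c + 1 := by
    intro A
    by_contra h
    push_neg at h
    have h2 : c + 2 ≤ (cls A).card := h
    have h3 := ha (cls A) h2
    have hsub : (cls A).biUnion L ⊆ A := by
      intro x hx
      rcases Finset.mem_biUnion.mp hx with ⟨u, hu, hxu⟩
      rwa [hmemcls.mp hu] at hxu
    have : ((cls A).biUnion L).card ≤ c := by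
      calc ((cls A).biUnion L).card ≤ A.card := Finset.card_le_card hsub
        _ ≤ c := by
          rcases Finset.card_pos.mp (by omega : 0 < (cls A).card) with ⟨u, hu⟩
          have := hsize u
          rw [hmemcls.mp hu] at this
          omega
    omega
  -- in each class of size c+1 there is a nonadjacent pair
  have hpair : ∀ A : Finset ℕ, (cls A).card = c + 1 →
      ∃ p : V × V, p.1 ∈ cls A ∧ p.2 ∈ cls A ∧ p.1 ≠ p.2 ∧ ¬ G.Adj p.1 p.2 := by
    intro A hA
    by_contra h
    push_neg at h
    refine hb (cls A) ?_ hA ⟨A, fun v hv => hmemcls.mp hv⟩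
    intro u hu w hw hne
    exact h (u, w) (Finset.mem_coe.mp hu) (Finset.mem_coe.mp hw) hne
  choose pr hpr1 hpr2 hpr3 hpr4 using hpair
  -- the chosen nonadjacent pair, as a Finset
  set pairset : Finset ℕ → Finset V := fun A =>
    if h : (cls A).card = c + 1 then {(pr A h).1, (pr A h).2} else ∅ with hpairset
  have hpairsub : ∀ A, pairset A ⊆ cls A := by
    intro A
    rw [hpairset]
    dsimp only
    split
    · rename_i h
      intro x hx
      rcases Finset.mem_insert.mp hx with h1 | h1
      · rw [h1]; exact hpr1 A h
      · rw [Finset.mem_singleton.mp h1]; exact hpr2 A h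
    · exact fun x hx => absurd hx (Finset.notMem_empty x)
  have hpairnadj : ∀ A, ∀ u ∈ pairset A, ∀ w ∈ pairset A, u ≠ w → ¬ G.Adj u w := by
    intro A
    rw [hpairset]
    dsimp only
    split
    · rename_i h
      intro u hu w hw hne
      simp only [Finset.mem_insert, Finset.mem_singleton] at hu hw
      rcases hu with rfl | rfl <;> rcases hw with rfl | rfl
      · exact absurd rfl hne
      · exact hpr4 A h
      · exact fun hadj => hpr4 A h hadj.symm
      · exact absurd rfl hne
    · intro u hu; exact absurd hu (Finset.notMem_empty u)
  -- grouping: each vertex goes to its pair (if in one) or stays alone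
  set part : V → Finset V := fun v =>
    if v ∈ pairset (L v) then pairset (L v) else {v} with hpart
  have hpartval : ∀ v, (v ∈ pairset (L v) → part v = pairset (L v)) ∧
      (v ∉ pairset (L v) → part v = {v}) := by
    intro v
    constructor
    · intro hv; rw [hpart]; dsimp only; rw [if_pos hv]
    · intro hv; rw [hpart]; dsimp only; rw [if_neg hv]
  have hself : ∀ v, v ∈ part v := by
    intro v
    by_cases hv : v ∈ pairset (L v)
    · rw [(hpartval v).1 hv]; exact hv
    · rw [(hpartval v).2 hv]; exact Finset.mem_singleton_self v
  have hlist : ∀ v u, u ∈ part v → L u = L v := by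
    intro v u hu
    by_cases hv : v ∈ pairset (L v)
    · rw [(hpartval v).1 hv] at hu
      exact hmemcls.mp (hpairsub (L v) hu)
    · rw [(hpartval v).2 hv] at hu
      rw [Finset.mem_singleton.mp hu]
  have hpeq : ∀ v u, u ∈ part v → part u = part v := by
    intro v u hu
    have hLu : L u = L v := hlist v u hu
    by_cases hv : v ∈ pairset (L v)
    · have hpv : part v = pairset (L v) := (hpartval v).1 hv
      have hu' : u ∈ pairset (L u) := by rw [hLu]; rw [hpv] at hu; exact hu
      rw [(hpartval u).1 hu', hLu, hpv]
    · have hpv : part v = {v} := (hpartval v).2 hv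
      rw [hpv] at hu
      rw [Finset.mem_singleton.mp hu]
  have hnadj : ∀ v, ∀ u ∈ part v, ∀ w ∈ part v, u ≠ w → ¬ G.Adj u w := by
    intro v u hu w hw hne
    by_cases hv : v ∈ pairset (L v)
    · rw [(hpartval v).1 hv] at hu hw
      exact hpairnadj (L v) u hu w hw hne
    · rw [(hpartval v).2 hv] at hu hw
      rw [Finset.mem_singleton.mp hu, Finset.mem_singleton.mp hw] at hne
      exact absurd rfl hne
  -- Hall's condition over the parts
  set parts : Finset (Finset V) := univ.image part with hparts
  have hpartsmem : ∀ P ∈ parts, ∀ x ∈ P, part x = P := by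
    intro P hP x hx
    rcases Finset.mem_image.mp hP with ⟨v, _, rfl⟩
    exact hpeq v x hx
  set t : {P // P ∈ parts} → Finset ℕ := fun P => P.1.biUnion L with ht
  have hall : ∀ s : Finset {P // P ∈ parts}, s.card ≤ (s.biUnion t).card := by
    intro s
    rcases s.eq_empty_or_nonempty with rfl | ⟨P0, hP0⟩
    · simp
    set X : Finset V := s.biUnion (fun P => P.1) with hX
    have hdisj : (s : Set {P // P ∈ parts}).PairwiseDisjoint (fun P => (P.1 : Finset V)) := by
      intro P _ Q _ hne
      refine Finset.disjoint_left.mpr fun x hxP hxQ => hne ?_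
      have h1 := hpartsmem P.1 P.2 x hxP
      have h2 := hpartsmem Q.1 Q.2 x hxQ
      exact Subtype.ext (h1 ▸ h2 ▸ rfl)
    have hne : ∀ P ∈ s, (P.1 : Finset V).Nonempty := by
      intro P _
      rcases Finset.mem_image.mp P.2 with ⟨v, -, hv⟩
      exact ⟨v, hv ▸ hself v⟩
    have hsX : s.card ≤ X.card := Finset.card_le_card_biUnion hdisj hne
    have hXt : s.biUnion t = X.biUnion L := by
      rw [hX, Finset.biUnion_biUnion]
    rw [hXt]
    -- a vertex of X
    rcases hne P0 hP0 with ⟨v0, hv0⟩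
    have hv0X : v0 ∈ X := Finset.mem_biUnion.mpr ⟨P0, hP0, hv0⟩
    have hLsub : ∀ v ∈ X, L v ⊆ X.biUnion L := by
      intro v hv x hx
      exact Finset.mem_biUnion.mpr ⟨v, hv, hx⟩
    by_cases hsc : s.card ≤ c
    · calc s.card ≤ c := hsc
        _ = (L v0).card := (hsize v0).symm
        _ ≤ (X.biUnion L).card := Finset.card_le_card (hLsub v0 hv0X)
    · push_neg at hsc
      by_cases hX2 : c + 2 ≤ X.card
      · exact le_trans hsX (ha X hX2)
      · -- X.card = c + 1; derive a contradiction from |X.biUnion L| ≤ c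
        have hXc : X.card = c + 1 := by omega
        by_contra hlt
        push_neg at hlt
        have hBc : (X.biUnion L).card ≤ c := by omega
        -- all lists on X equal A := X.biUnion L
        have hAeq : ∀ v ∈ X, L v = X.biUnion L := by
          intro v hv
          refine Finset.eq_of_subset_of_card_le (hLsub v hv) ?_
          rw [hsize v]; exact hBc
        set A : Finset ℕ := X.biUnion L with hA
        have hXcls : X ⊆ cls A := fun v hv => hmemcls.mpr (hAeq v hv)
        have hclsA : (cls A).card = c + 1 :=
          le_antisymm (hclscard A) (hXc ▸ Finset.card_le_card hXcls)
        have hXeq : X = cls A :=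
          Finset.eq_of_subset_of_card_le hXcls (by omega)
        -- the chosen pair gives a part of size 2 inside X
        set a : V := (pr A hclsA).1 with ha'
        have haX : a ∈ X := hXeq ▸ hpr1 A hclsA
        have hapair : a ∈ pairset (L a) := by
          have : L a = A := hmemcls.mp (hpr1 A hclsA)
          rw [this, hpairset]; dsimp only
          rw [dif_pos hclsA]
          exact Finset.mem_insert_self _ _
        have hparta : part a = pairset (L a) := (hpartval a).1 hapair
        have hcard2 : (part a).card = 2 := by
          rw [hparta]
          have : L a = A := hmemcls.mp (hpr1 A hclsA)
          rw [this, hpairset]; dsimp only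
          rw [dif_pos hclsA]
          exact Finset.card_pair (hpr3 A hclsA)
        -- sum of part sizes strictly exceeds s.card
        rcases Finset.mem_biUnion.mp haX with ⟨Pa, hPas, haPa⟩
        have hPaa : (Pa.1 : Finset V) = part a := (hpartsmem Pa.1 Pa.2 a haPa).symm
        have hsum : X.card = ∑ P ∈ s, (P.1 : Finset V).card :=
          Finset.card_biUnion (fun P hP Q hQ hne' => hdisj hP hQ hne')
        have hgt : s.card < ∑ P ∈ s, (P.1 : Finset V).card := by
          have h1 : ∑ _P ∈ s, 1 < ∑ P ∈ s, (P.1 : Finset V).card := by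
            refine Finset.sum_lt_sum (fun P hP => Finset.card_pos.mpr (hne P hP)) ⟨Pa, hPas, ?_⟩
            rw [hPaa, hcard2]; omega
          simpa using h1
        omega
  -- apply Hall's marriage theorem
  obtain ⟨g, hginj, hgmem⟩ := (Finset.all_card_le_biUnion_card_iff_exists_injective t).mp hall
  have hpmem : ∀ v : V, part v ∈ parts := fun v =>
    Finset.mem_image.mpr ⟨v, Finset.mem_univ v, rfl⟩
  refine ⟨fun v => g ⟨part v, hpmem v⟩, ?_, ?_⟩
  · intro v
    have := hgmem ⟨part v, hpmem v⟩
    rw [ht] at this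
    rcases Finset.mem_biUnion.mp this with ⟨u, hu, hmem⟩
    rwa [hlist v u hu] at hmem
  · intro v w hadj heq'
    have hpe : part v = part w := congrArg Subtype.val (hginj heq')
    have hwv : w ∈ part v := hpe ▸ hself w
    exact hnadj v v (hself v) w hwv (G.ne_of_adj hadj) hadj
end

section
/- For each vertex of C_n^k draw independently and uniformly at random a c-element subset of a colour set of size s(n). If c ≤ k and s(n) = o(n^{1/c²}), then the probability that no c+1 consecutive vertices all receive the same list tends to 0 as n → ∞; consequently, the probability that C_n^k is colourable from the random lists tends to 0. -/
open Filter Finset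

open Asymptotics

namespace CPAux
open Finset

/-- The set of `c`-element subsets of `Fin S`. -/
def SS (S c : ℕ) : Finset (Finset (Fin S)) := Finset.powersetCard c Finset.univ

lemma mem_SS {S c : ℕ} {A : Finset (Fin S)} : A ∈ SS S c ↔ A.card = c := by
  simp [SS, Finset.mem_powersetCard]

lemma card_SS (S c : ℕ) : (SS S c).card = S.choose c := by
  simp [SS, Finset.card_powersetCard]

lemma allLists_eq (n S c : ℕ) :
    allLists (Fin n) S c = Fintype.piFinset (fun _ : Fin n => SS S c) := by
  ext L
  simp [allLists, Fintype.mem_piFinset, mem_SS]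

lemma card_allLists (n S c : ℕ) :
    (allLists (Fin n) S c).card = (S.choose c) ^ n := by
  rw [allLists_eq, Fintype.card_piFinset]
  simp [card_SS]

/-- Block assignments that are NOT constant. -/
def Bad (S c : ℕ) : Finset (Fin (c+1) → Finset (Fin S)) :=
  (Fintype.piFinset (fun _ : Fin (c+1) => SS S c)).filter (fun g => ¬ ∀ i, g i = g 0)

lemma card_Bad_le (S c : ℕ) :
    (Bad S c).card ≤ (S.choose c) ^ (c+1) - S.choose c := by
  classical
  have hsplit := Finset.card_filter_add_card_filter_not
    (s := Fintype.piFinset (fun _ : Fin (c+1) => SS S c)) (p := fun g => ∀ i, g i = g 0)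
  have hpi : (Fintype.piFinset (fun _ : Fin (c+1) => SS S c)).card = (S.choose c) ^ (c+1) := by
    rw [Fintype.card_piFinset]; simp [card_SS]
  have hgood : S.choose c ≤
      ((Fintype.piFinset (fun _ : Fin (c+1) => SS S c)).filter (fun g => ∀ i, g i = g 0)).card := by
    rw [← card_SS S c]
    apply Finset.card_le_card_of_injOn (fun A => fun _ => A)
    · intro A hA
      rw [Finset.mem_coe, Finset.mem_filter, Fintype.mem_piFinset]
      exact ⟨fun _ => Finset.mem_coe.1 hA, fun _ => rfl⟩
    · intro A _ B _ h
      exact congrFun h 0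
  have hbad : (Bad S c).card =
      (Fintype.piFinset (fun _ : Fin (c+1) => SS S c)).card -
      ((Fintype.piFinset (fun _ : Fin (c+1) => SS S c)).filter (fun g => ∀ i, g i = g 0)).card :=
    Nat.eq_sub_of_add_eq' hsplit
  rw [hbad, hpi]
  exact Nat.sub_le_sub_left hgood _

lemma idx_lt (n c j i : ℕ) (hj : j < n / (c+1)) (hi : i < c+1) : j * (c+1) + i < n := by
  have h2 : (n / (c+1)) * (c+1) ≤ n := Nat.div_mul_le_self n (c+1)
  have h1 : (j+1) * (c+1) ≤ (n / (c+1)) * (c+1) := Nat.mul_le_mul_right _ hj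
  have h3 : j * (c+1) + i < (j+1) * (c+1) := by
    rw [add_mul, one_mul]
    exact Nat.add_lt_add_left hi _
  exact lt_of_lt_of_le h3 (le_trans h1 h2)

lemma idx2_lt (n c t : ℕ) (ht : t < n % (c+1)) : (n / (c+1)) * (c+1) + t < n := by
  conv_rhs => rw [← Nat.div_add_mod n (c+1)]
  rw [mul_comm]
  exact Nat.add_lt_add_left ht _

lemma rot_eq_of_lt {n : ℕ} (a : Fin n) (i : ℕ) (h : a.val + i < n) : rot a i = ⟨a.val + i, h⟩ := by
  have hi : i < n := lt_of_le_of_lt (Nat.le_add_left i a.val) h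
  unfold rot
  apply Fin.ext
  simp only [Fin.add_def]
  rw [Nat.mod_eq_of_lt hi, Nat.mod_eq_of_lt h]

open scoped Classical in
lemma main_count (n S c : ℕ) :
    ((allLists (Fin n) S c).filter
        (fun L => ¬ ∃ a : Fin n, ∀ i ≤ c, L (rot a i) = L a)).card
      ≤ (Bad S c).card ^ (n / (c+1)) * (S.choose c) ^ (n % (c+1)) := by
  set m := n / (c+1) with hm
  set r := n % (c+1) with hr
  have hT : ((Fintype.piFinset (fun _ : Fin m => Bad S c)) ×ˢ
      (Fintype.piFinset (fun _ : Fin r => SS S c))).card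
      = (Bad S c).card ^ m * (S.choose c) ^ r := by
    rw [Finset.card_product, Fintype.card_piFinset, Fintype.card_piFinset]
    simp [card_SS]
  rw [← hT]
  apply Finset.card_le_card_of_injOn
    (fun L => (fun j i => L ⟨j.val * (c+1) + i.val, idx_lt n c j.val i.val j.isLt i.isLt⟩,
               fun t => L ⟨m * (c+1) + t.val, idx2_lt n c t.val t.isLt⟩))
  · intro L hL
    rw [Finset.mem_coe, Finset.mem_filter] at hL
    obtain ⟨hL1, hL2⟩ := hL
    rw [allLists_eq, Fintype.mem_piFinset] at hL1
    rw [Finset.mem_coe, Finset.mem_product]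
    constructor
    · rw [Fintype.mem_piFinset]
      intro j
      unfold Bad
      rw [Finset.mem_filter, Fintype.mem_piFinset]
      refine ⟨fun i => hL1 _, ?_⟩
      intro hall
      apply hL2
      refine ⟨⟨j.val * (c+1), idx_lt n c j.val 0 j.isLt (Nat.succ_pos c)⟩, ?_⟩
      intro i hi
      have hi' : i < c + 1 := Nat.lt_succ_of_le hi
      have h1 : rot (⟨j.val * (c+1), idx_lt n c j.val 0 j.isLt (Nat.succ_pos c)⟩ : Fin n) i
          = ⟨j.val * (c+1) + i, idx_lt n c j.val i j.isLt hi'⟩ :=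
        rot_eq_of_lt _ _ (idx_lt n c j.val i j.isLt hi')
      rw [h1]
      have h2 := hall ⟨i, hi'⟩
      have h3 := hall 0
      simp only at h2 h3
      rw [h2]
      rw [show (⟨j.val * (c+1) + ((0 : Fin (c+1)) : ℕ), _⟩ : Fin n)
          = ⟨j.val * (c+1), idx_lt n c j.val 0 j.isLt (Nat.succ_pos c)⟩ from Fin.ext (by simp)]
    · rw [Fintype.mem_piFinset]
      intro t
      exact hL1 _
  · intro L₁ hL₁ L₂ hL₂ h
    simp only [Prod.mk.injEq] at h
    obtain ⟨h1, h2⟩ := h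
    funext v
    rcases lt_or_ge v.val (m * (c+1)) with hv | hv
    · have hj : v.val / (c+1) < m := by
        rw [hm, Nat.div_lt_iff_lt_mul (Nat.succ_pos c)]
        exact hv
      have hi : v.val % (c+1) < c + 1 := Nat.mod_lt _ (Nat.succ_pos c)
      have key := congrFun (congrFun h1 ⟨v.val / (c+1), hj⟩) ⟨v.val % (c+1), hi⟩
      simp only at key
      have hvv : (⟨v.val / (c+1) * (c+1) + v.val % (c+1),
          idx_lt n c _ _ hj hi⟩ : Fin n) = v := by
        apply Fin.ext
        simp only
        rw [mul_comm]
        exact Nat.div_add_mod v.val (c+1)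
      rwa [hvv] at key
    · have h3 : m * (c+1) + r = n := by rw [hm, hr, mul_comm]; exact Nat.div_add_mod n (c+1)
      have ht : v.val - m * (c+1) < r := by
        have h4 := v.isLt
        omega
      have key := congrFun h2 ⟨v.val - m * (c+1), ht⟩
      simp only at key
      have hvv : (⟨m * (c+1) + (v.val - m * (c+1)),
          idx2_lt n c _ ht⟩ : Fin n) = v := by
        apply Fin.ext
        simp only
        omega
      rwa [hvv] at key

lemma probEvent_def (V : Type) [Fintype V] [DecidableEq V] (S c : ℕ)
    (P : (V → Finset (Fin S)) → Prop) [DecidablePred P] :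
    probEvent V S c P = (((allLists V S c).filter P).card : ℝ) / ((allLists V S c).card : ℝ) := by
  unfold probEvent
  rw [Finset.filter_congr_decidable]

lemma prob_le (n S c : ℕ) (hcS : c ≤ S) :
    probEvent (Fin n) S c (fun L => ¬ ∃ a : Fin n, ∀ i ≤ c, L (rot a i) = L a)
      ≤ Real.exp (-(((n / (c+1) : ℕ) : ℝ) / ((S.choose c : ℝ)) ^ c)) := by
  have hN : 1 ≤ S.choose c := Nat.choose_pos hcS
  have hx1 : (1 : ℝ) ≤ (S.choose c : ℝ) := by exact_mod_cast hN
  have hx0 : (0 : ℝ) < (S.choose c : ℝ) := lt_of_lt_of_le one_pos hx1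
  set N := S.choose c with hNdef
  set m := n / (c+1) with hm
  set r := n % (c+1) with hr
  set x : ℝ := (N : ℝ) with hx
  have hxc : (1 : ℝ) ≤ x ^ c := one_le_pow₀ hx1
  have hxcpos : (0 : ℝ) < x ^ c := by positivity
  have h2 : N ≤ N ^ (c+1) := Nat.le_self_pow (Nat.succ_ne_zero c) N
  have hBadR : ((Bad S c).card : ℝ) ≤ x ^ (c+1) - x := by
    have h1 : ((Bad S c).card : ℝ) ≤ ((N ^ (c+1) - N : ℕ) : ℝ) :=
      Nat.cast_le.2 (card_Bad_le S c)
    rwa [Nat.cast_sub h2, Nat.cast_pow] at h1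
  have hnum : (((allLists (Fin n) S c).filter
      (fun L => ¬ ∃ a : Fin n, ∀ i ≤ c, L (rot a i) = L a)).card : ℝ)
      ≤ (x ^ (c+1) - x) ^ m * x ^ r := by
    have h4 : (((allLists (Fin n) S c).filter
        (fun L => ¬ ∃ a : Fin n, ∀ i ≤ c, L (rot a i) = L a)).card : ℝ)
        ≤ (((Bad S c).card : ℝ)) ^ m * x ^ r := by
      have := main_count n S c
      calc (((allLists (Fin n) S c).filter
          (fun L => ¬ ∃ a : Fin n, ∀ i ≤ c, L (rot a i) = L a)).card : ℝ)
          ≤ (((Bad S c).card ^ m * N ^ r : ℕ) : ℝ) := Nat.cast_le.2 this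
        _ = (((Bad S c).card : ℝ)) ^ m * x ^ r := by push_cast; ring
    refine le_trans h4 ?_
    have hnn : (0:ℝ) ≤ ((Bad S c).card : ℝ) := Nat.cast_nonneg _
    have hp : (((Bad S c).card : ℝ)) ^ m ≤ (x ^ (c+1) - x) ^ m :=
      pow_le_pow_left₀ hnn hBadR m
    have : (0:ℝ) ≤ x ^ r := by positivity
    exact mul_le_mul_of_nonneg_right hp this
  rw [probEvent_def, card_allLists]
  have hxn : ((N ^ n : ℕ) : ℝ) = x ^ n := by push_cast; ring
  rw [hxn]
  have hn' : x ^ n = (x ^ (c+1)) ^ m * x ^ r := by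
    rw [← pow_mul, ← pow_add]
    congr 1
    rw [mul_comm (c+1) m, hm, hr, mul_comm]
    exact (Nat.div_add_mod n (c+1)).symm
  have hxr : (0:ℝ) < x ^ r := by positivity
  have hxn0 : (0:ℝ) < x ^ n := by positivity
  calc (((allLists (Fin n) S c).filter
      (fun L => ¬ ∃ a : Fin n, ∀ i ≤ c, L (rot a i) = L a)).card : ℝ) / x ^ n
      ≤ ((x ^ (c+1) - x) ^ m * x ^ r) / x ^ n := by
        gcongr
    _ = ((x ^ (c+1) - x) / x ^ (c+1)) ^ m := by
        rw [hn', div_pow, mul_div_mul_right _ _ (ne_of_gt hxr)]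
    _ = (1 - 1 / x ^ c) ^ m := by
        congr 1
        have hxne : x ≠ 0 := ne_of_gt hx0
        field_simp
        ring
    _ ≤ (Real.exp (-(1 / x ^ c))) ^ m := by
        apply pow_le_pow_left₀
        · have : 1 / x ^ c ≤ 1 := by
            rw [div_le_one hxcpos]; exact hxc
          linarith
        · have := Real.add_one_le_exp (-(1 / x ^ c))
          linarith
    _ = Real.exp (-((m : ℝ) / x ^ c)) := by
        rw [← Real.exp_nat_mul]
        congr 1
        ring

lemma tendsto_exp_bound (c : ℕ) (hc : 1 ≤ c) (s : ℕ → ℕ) (hs : ∀ n, c ≤ s n)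
    (hlittle : (fun n : ℕ => (s n : ℝ)) =o[Filter.atTop]
      fun n : ℕ => (n : ℝ) ^ ((1 : ℝ) / (c^2 : ℝ))) :
    Filter.Tendsto
      (fun n : ℕ => Real.exp (-(((n / (c+1) : ℕ) : ℝ) / (((s n).choose c : ℝ)) ^ c)))
      Filter.atTop (nhds 0) := by
  have hcc : 0 < c ^ 2 := by positivity
  have h1 : (fun n : ℕ => ((s n : ℝ)) ^ (c^2)) =o[Filter.atTop] (fun n : ℕ => (n : ℝ)) := by
    have h := hlittle.pow hcc
    refine h.congr' (Filter.EventuallyEq.rfl) ?_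
    filter_upwards [] with n
    rw [← Real.rpow_natCast ((n : ℝ) ^ ((1 : ℝ) / (c^2 : ℝ))) (c^2),
      ← Real.rpow_mul (Nat.cast_nonneg n)]
    rw [show (1 : ℝ) / (c^2 : ℝ) * ((c^2 : ℕ) : ℝ) = 1 by
      push_cast
      field_simp]
    exact Real.rpow_one _
  have h2 := h1.tendsto_div_nhds_zero
  have h3 : Filter.Tendsto (fun n : ℕ => (n : ℝ) / ((s n : ℝ)) ^ (c^2))
      Filter.atTop Filter.atTop := by
    have h4 : Filter.Tendsto (fun n : ℕ => ((s n : ℝ)) ^ (c^2) / n) Filter.atTop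
        (nhdsWithin 0 (Set.Ioi 0)) := by
      apply tendsto_nhdsWithin_of_tendsto_nhds_of_eventually_within _ h2
      filter_upwards [Filter.eventually_ge_atTop 1] with n hn
      have hsn : (1 : ℝ) ≤ ((s n : ℝ)) ^ (c^2) := by
        apply one_le_pow₀
        exact_mod_cast le_trans hc (hs n)
      have hn' : (0 : ℝ) < n := by exact_mod_cast hn
      exact div_pos (by linarith) hn'
    have h5 := h4.inv_tendsto_nhdsGT_zero
    refine h5.congr (fun n => ?_)
    simp [inv_div]
  have h6 : Filter.Tendsto
      (fun n : ℕ => ((n : ℝ) / ((s n : ℝ)) ^ (c^2)) / (c+1) + (-1))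
      Filter.atTop Filter.atTop :=
    Filter.tendsto_atTop_add_const_right _ _ (h3.atTop_div_const (by positivity))
  have hg : Filter.Tendsto
      (fun n : ℕ => ((n / (c+1) : ℕ) : ℝ) / (((s n).choose c : ℝ)) ^ c)
      Filter.atTop Filter.atTop := by
    apply Filter.tendsto_atTop_mono' Filter.atTop _ h6
    filter_upwards [] with n
    set B : ℝ := ((s n : ℝ)) ^ (c^2) with hB
    set X : ℝ := (((s n).choose c : ℝ)) ^ c with hX
    set q : ℝ := ((n / (c+1) : ℕ) : ℝ) with hq
    have hB1 : (1 : ℝ) ≤ B := by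
      rw [hB]; apply one_le_pow₀; exact_mod_cast le_trans hc (hs n)
    have hX1 : (1 : ℝ) ≤ X := by
      rw [hX]; apply one_le_pow₀
      have := Nat.choose_pos (hs n)
      exact_mod_cast this
    have hXB : X ≤ B := by
      rw [hX, hB]
      have hnat : ((s n).choose c) ^ c ≤ (s n) ^ (c^2) := by
        calc ((s n).choose c) ^ c ≤ ((s n) ^ c) ^ c :=
              Nat.pow_le_pow_left (Nat.choose_le_pow _ _) c
          _ = (s n) ^ (c^2) := by rw [← pow_mul, sq]
      calc ((s n).choose c : ℝ) ^ c = ((((s n).choose c) ^ c : ℕ) : ℝ) := by push_cast; ring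
        _ ≤ (((s n) ^ (c^2) : ℕ) : ℝ) := Nat.cast_le.2 hnat
        _ = ((s n : ℝ)) ^ (c^2) := by push_cast; ring
    have hq0 : (0 : ℝ) ≤ q := Nat.cast_nonneg _
    have hqn : (n : ℝ) / (c+1) ≤ q + 1 := by
      rw [div_le_iff₀ (by positivity)]
      have h7 := Nat.div_add_mod n (c+1)
      have h7b : n % (c+1) < c+1 := Nat.mod_lt _ (Nat.succ_pos c)
      have h8 : n ≤ (c+1) * (n/(c+1)) + c := by omega
      have h9 : ((n : ℝ)) ≤ (c+1) * ((n/(c+1) : ℕ) : ℝ) + c := by exact_mod_cast h8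
      rw [hq]
      push_cast
      nlinarith
    have e1 : ((n : ℝ) / B) / (c+1) = ((n : ℝ) / (c+1)) / B := by ring
    have e2 : ((n : ℝ) / (c+1)) / B ≤ (q + 1) / B := by gcongr
    have e3 : (q + 1) / B ≤ q / B + 1 := by
      rw [add_div]
      have : (1 : ℝ) / B ≤ 1 := by
        rw [div_le_one (by linarith)]; exact hB1
      linarith
    have hX0 : (0 : ℝ) < X := by linarith
    have e4 : q / B ≤ q / X := by
      rw [div_le_div_iff₀ (by linarith) hX0]
      nlinarith
    linarith
  exact Real.tendsto_exp_neg_atTop_nhds_zero.comp hg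

lemma probEvent_nonneg (V : Type) [Fintype V] [DecidableEq V] (S c : ℕ)
    (P : (V → Finset (Fin S)) → Prop) : 0 ≤ probEvent V S c P := by
  unfold probEvent
  positivity

lemma probEvent_mono (V : Type) [Fintype V] [DecidableEq V] (S c : ℕ)
    {P Q : (V → Finset (Fin S)) → Prop}
    (h : ∀ L ∈ allLists V S c, P L → Q L) : probEvent V S c P ≤ probEvent V S c Q := by
  classical
  unfold probEvent
  have hcard : (((allLists V S c).filter P).card : ℝ) ≤ (((allLists V S c).filter Q).card : ℝ) := by
    apply Nat.cast_le.2
    apply Finset.card_le_card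
    intro L hL
    rw [Finset.mem_filter] at hL ⊢
    exact ⟨hL.1, h L hL.1 hL.2⟩
  rcases Nat.eq_zero_or_pos (allLists V S c).card with h0 | h0
  · rw [h0]; simp
  · have h0' : (0 : ℝ) < ((allLists V S c).card : ℝ) := by exact_mod_cast h0
    exact (div_le_div_iff_of_pos_right h0').2 hcard

lemma mod_two_cases (y n : ℕ) (h : y < 2*n) (hn : 0 < n) : y % n = y ∨ y % n + n = y := by
  rcases Nat.lt_or_ge y n with h1 | h1
  · left; exact Nat.mod_eq_of_lt h1
  · right
    rw [Nat.mod_eq_sub_mod h1, Nat.mod_eq_of_lt (by omega)]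
    omega

lemma cycleDist_le' (n x i j : ℕ) (hx : x < n) (hij : i < j) (hj : j < n) :
    cycleDist n ((x+i) % n) ((x+j) % n) ≤ j - i := by
  have hn : 0 < n := lt_of_le_of_lt (Nat.zero_le x) hx
  have hu : (x+i) % n < n := Nat.mod_lt _ hn
  have hv : (x+j) % n < n := Nat.mod_lt _ hn
  have h1 := mod_two_cases (x+i) n (by omega) hn
  have h2 := mod_two_cases (x+j) n (by omega) hn
  have h3 := mod_two_cases ((x+j) % n + n - (x+i) % n) n (by omega) hn
  have hw : ((x+j) % n + n - (x+i) % n) % n < n := Nat.mod_lt _ hn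
  unfold cycleDist
  have h4 : ((x+j) % n + n - (x+i) % n) % n ≤ j - i := by
    rcases h1 with h1 | h1 <;> rcases h2 with h2 | h2 <;> rcases h3 with h3 | h3 <;> omega
  exact le_trans (min_le_right _ _) h4

lemma colourable_implies (n k c S : ℕ) (hck : c ≤ k) (hcn : c < n)
    (L : Fin n → Finset (Fin S)) (hL : ∀ v, (L v).card = c)
    (hcol : colourable (cyclePower n k) L) :
    ¬ ∃ a : Fin n, ∀ i ≤ c, L (rot a i) = L a := by
  rintro ⟨a, ha⟩
  obtain ⟨f, hf, hadj⟩ := hcol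
  have hrotval : ∀ i : ℕ, i ≤ c → (rot a i).val = (a.val + i) % n := by
    intro i hi
    unfold rot
    rw [Fin.add_def]
    simp only
    rw [Nat.mod_eq_of_lt (show i < n by omega)]
  have hadj' : ∀ p q : Fin (c+1), p ≠ q →
      (cyclePower n k).Adj (rot a p.val) (rot a q.val) := by
    have hsymm := (cyclePower n k).symm
    have key : ∀ p q : Fin (c+1), p.val < q.val →
        (cyclePower n k).Adj (rot a p.val) (rot a q.val) := by
      intro p q hpq
      have hp := Nat.le_of_lt_succ p.isLt
      have hq := Nat.le_of_lt_succ q.isLt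
      have hd : cycleDist n ((a.val + p.val) % n) ((a.val + q.val) % n) ≤ q.val - p.val :=
        cycleDist_le' n a.val p.val q.val a.isLt hpq (by omega)
      constructor
      · intro heq
        have h5 : (rot a p.val).val = (rot a q.val).val := congrArg Fin.val heq
        rw [hrotval p.val hp, hrotval q.val hq] at h5
        have h6 := mod_two_cases (a.val + p.val) n (by omega) (by omega)
        have h7 := mod_two_cases (a.val + q.val) n (by omega) (by omega)
        omega
      · rw [hrotval p.val hp, hrotval q.val hq]
        exact le_trans hd (by omega)
    intro p q hpq
    rcases Nat.lt_or_ge p.val q.val with h | h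
    · exact key p q h
    · have hlt : q.val < p.val := by
        have hne : p.val ≠ q.val := fun hh => hpq (Fin.ext hh)
        omega
      exact hsymm.symm _ _ (key q p hlt)
  have hginj : Function.Injective
      (fun p : Fin (c+1) => (⟨f (rot a p.val), by
        rw [← ha p.val (Nat.le_of_lt_succ p.isLt)]
        exact hf _⟩ : {y // y ∈ L a})) := by
    intro p q hpq
    by_contra hne
    have := hadj' p q hne
    exact hadj this (congrArg Subtype.val hpq)
  have hcard := Fintype.card_le_of_injective _ hginj
  rw [Fintype.card_coe, hL a, Fintype.card_fin] at hcard
  omega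
end CPAux

theorem prob_colourable_tendsto_zero (c k : ℕ) (hc : 1 ≤ c) (hck : c ≤ k)
    (s : ℕ → ℕ) (hs : ∀ n, c ≤ s n)
    (hlittle : (fun n : ℕ => (s n : ℝ)) =o[atTop]
      fun n : ℕ => (n : ℝ) ^ ((1 : ℝ) / (c^2 : ℝ))) :
    Tendsto (fun n => probEvent (Fin n) (s n) c
        (fun L => ¬ ∃ a : Fin n, ∀ i ≤ c, L (rot a i) = L a)) atTop (nhds 0) ∧
    Tendsto (fun n => probEvent (Fin n) (s n) c (colourable (cyclePower n k)))
      atTop (nhds 0) := by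
  have part1 : Tendsto (fun n => probEvent (Fin n) (s n) c
      (fun L => ¬ ∃ a : Fin n, ∀ i ≤ c, L (rot a i) = L a)) atTop (nhds 0) := by
    apply tendsto_of_tendsto_of_tendsto_of_le_of_le' tendsto_const_nhds
      (CPAux.tendsto_exp_bound c hc s hs hlittle)
    · exact Filter.Eventually.of_forall fun n => CPAux.probEvent_nonneg _ _ _ _
    · exact Filter.Eventually.of_forall fun n => CPAux.prob_le n (s n) c (hs n)
  refine ⟨part1, ?_⟩
  apply tendsto_of_tendsto_of_tendsto_of_le_of_le' tendsto_const_nhds part1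
  · exact Filter.Eventually.of_forall fun n => CPAux.probEvent_nonneg _ _ _ _
  · filter_upwards [Filter.eventually_gt_atTop c] with n hn
    apply CPAux.probEvent_mono
    intro L hL hcol
    refine CPAux.colourable_implies n k c (s n) hck hn L ?_ hcol
    intro v
    simp only [allLists, Finset.mem_filter] at hL
    exact hL.2 v
end

section
/- Let c = k+1. Consider a colour scheme on C_n^k (n large) containing a 'good' segment of 2[(k+1)² + (k+1)] consecutive vertices, partitioned into a first and last (k+1)-block and k+1 intermediate pairs of (k+1)-blocks, where: every vertex of the first and last block has list {1,...,k+1}, and for each 1 ≤ i ≤ k+1, every vertex of the second block of the i-th pair has list {1,...,k+1} and every vertex of the first block has list {1,...,k+2}\{i}; all remaining vertices have arbitrary lists of size k+1 from {1,...,k+2}. Then C_n^k is colourable from these lists. -/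
open Filter Finset

open Asymptotics

-- ### mod and rot helpers

lemma mod_two_cases {n : ℕ} (hn : 0 < n) (x : ℕ) (h : x < 2*n) :
    x % n = if x < n then x else x - n := by
  split_ifs with h1
  · exact Nat.mod_eq_of_lt h1
  · rw [Nat.mod_eq_sub_mod (by omega)]
    exact Nat.mod_eq_of_lt (by omega)

lemma rot_val' {n : ℕ} (a : Fin n) (i : ℕ) : (rot a i).val = (a.val + i % n) % n := by
  unfold rot
  rw [Fin.add_def]

lemma rot_congr' {n : ℕ} (a : Fin n) {x y : ℕ} (h : x % n = y % n) :
    rot a x = rot a y := by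
  apply Fin.ext
  rw [rot_val', rot_val', h]

lemma rot_inv' {n : ℕ} (a v : Fin n) : rot a ((v.val + n - a.val) % n) = v := by
  have hn0 : 0 < n := a.pos
  have hv := v.isLt
  have ha := a.isLt
  apply Fin.ext
  rw [rot_val', Nat.mod_mod_of_dvd _ dvd_rfl]
  rw [Nat.add_mod_mod]
  rw [show a.val + (v.val + n - a.val) = v.val + n from by omega, Nat.add_mod_right]
  exact Nat.mod_eq_of_lt hv

lemma offs_add {n : ℕ} (hn : 0 < n) (av vv wv : ℕ) (ha : av < n) (hv : vv < n)
    (hw : wv < n) :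
    ((vv + n - av) % n + (wv + n - vv) % n) % n = (wv + n - av) % n := by
  rw [Nat.add_mod_mod, Nat.mod_add_mod]
  rw [show (vv + n - av) + (wv + n - vv) = (wv + n - av) + n from by omega,
    Nat.add_mod_right]

-- ### greedy colouring of the outside

def pick (k n : ℕ) (a : Fin n) (L : Fin n → Finset (Fin (k+2))) (pos : ℕ)
    (forb : Finset (Fin (k+2))) : Fin (k+2) :=
  if h : (L (rot a pos) \ forb).Nonempty then (L (rot a pos) \ forb).min' h
  else ⟨0, by omega⟩

lemma pick_spec (k n : ℕ) (a : Fin n) (L : Fin n → Finset (Fin (k+2)))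
    (hcard : ∀ v, (L v).card = k + 1) (pos : ℕ) (forb : Finset (Fin (k+2)))
    (hforb : forb.card ≤ k) :
    pick k n a L pos forb ∈ L (rot a pos) ∧ pick k n a L pos forb ∉ forb := by
  have hne : (L (rot a pos) \ forb).Nonempty := by
    rw [← Finset.card_pos]
    have h1 := Finset.card_le_card_sdiff_add_card (s := L (rot a pos)) (t := forb)
    rw [hcard] at h1
    omega
  have hmem : pick k n a L pos forb ∈ L (rot a pos) \ forb := by
    unfold pick
    rw [dif_pos hne]
    exact Finset.min'_mem _ hne
  rw [Finset.mem_sdiff] at hmem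
  exact hmem

def outForb (k : ℕ) (f : ℕ → Fin (k+2)) (s : ℕ) : Finset (Fin (k+2)) :=
  (Finset.Icc 1 (min k s)).image (fun d => f (s - d))

lemma outForb_card (k : ℕ) (f : ℕ → Fin (k+2)) (s : ℕ) :
    (outForb k f s).card ≤ min k s := by
  calc (outForb k f s).card ≤ (Finset.Icc 1 (min k s)).card := Finset.card_image_le
    _ ≤ min k s := by rw [Nat.card_Icc]; omega

lemma mem_outForb {k : ℕ} {f : ℕ → Fin (k+2)} {s : ℕ} (d : ℕ) (h1 : 1 ≤ d)
    (h2 : d ≤ min k s) : f (s - d) ∈ outForb k f s := by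
  rw [outForb, Finset.mem_image]
  exact ⟨d, by simp only [Finset.mem_Icc]; omega, rfl⟩

lemma attach_image_eq (k : ℕ) (f : ℕ → Fin (k+2)) (s : ℕ) :
    (Finset.Icc 1 (min k s)).attach.image (fun d => f (s - d.1)) = outForb k f s := by
  rw [outForb]
  ext x
  simp only [Finset.mem_image, Finset.mem_attach, true_and, Subtype.exists,
    Finset.mem_Icc]
  constructor
  · rintro ⟨d, hd, rfl⟩
    exact ⟨d, hd, rfl⟩
  · rintro ⟨d, hd, rfl⟩
    exact ⟨d, hd, rfl⟩

def outC (k n : ℕ) (a : Fin n) (L : Fin n → Finset (Fin (k+2))) : ℕ → Fin (k+2)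
  | s => pick k n a L ((2*k+4)*(k+1) + s)
      ((Finset.Icc 1 (min k s)).attach.image (fun d => outC k n a L (s - d.1)))
  termination_by s => s
  decreasing_by
    have hd := d.2
    simp only [Finset.mem_Icc] at hd
    omega

lemma outC_spec (k n : ℕ) (a : Fin n) (L : Fin n → Finset (Fin (k+2)))
    (hcard : ∀ v, (L v).card = k + 1) (s : ℕ) :
    outC k n a L s ∈ L (rot a ((2*k+4)*(k+1) + s)) ∧
      ∀ d, 1 ≤ d → d ≤ min k s → outC k n a L s ≠ outC k n a L (s - d) := by
  have he : outC k n a L s = pick k n a L ((2*k+4)*(k+1) + s)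
      (outForb k (outC k n a L) s) := by
    rw [outC, attach_image_eq]
  have hs := pick_spec k n a L hcard ((2*k+4)*(k+1) + s)
    (outForb k (outC k n a L) s) (le_trans (outForb_card _ _ _) (by omega))
  rw [← he] at hs
  refine ⟨hs.1, ?_⟩
  intro d h1 h2 heq
  exact hs.2 (heq ▸ mem_outForb d h1 h2)

def tcolC (k n : ℕ) (a : Fin n) (L : Fin n → Finset (Fin (k+2))) : ℕ → Fin (k+2)
  | s => pick k n a L ((2*k+4)*(k+1) - 1 - s)
      ((Finset.Icc 1 (min k s)).attach.image (fun d => tcolC k n a L (s - d.1)) ∪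
        (Finset.range (k - s)).image (fun d => outC k n a L d))
  termination_by s => s
  decreasing_by
    have hd := d.2
    simp only [Finset.mem_Icc] at hd
    omega

lemma tcolC_spec (k n : ℕ) (a : Fin n) (L : Fin n → Finset (Fin (k+2)))
    (hcard : ∀ v, (L v).card = k + 1) (s : ℕ) :
    tcolC k n a L s ∈ L (rot a ((2*k+4)*(k+1) - 1 - s)) ∧
      (∀ d, 1 ≤ d → d ≤ min k s → tcolC k n a L s ≠ tcolC k n a L (s - d)) ∧
      (∀ d, d < k - s → tcolC k n a L s ≠ outC k n a L d) := by
  have he : tcolC k n a L s = pick k n a L ((2*k+4)*(k+1) - 1 - s)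
      (outForb k (tcolC k n a L) s ∪
        (Finset.range (k - s)).image (fun d => outC k n a L d)) := by
    rw [tcolC, attach_image_eq]
  have hcardu : (outForb k (tcolC k n a L) s ∪
      (Finset.range (k - s)).image (fun d => outC k n a L d)).card ≤ k := by
    calc (outForb k (tcolC k n a L) s ∪
        (Finset.range (k - s)).image (fun d => outC k n a L d)).card
        ≤ (outForb k (tcolC k n a L) s).card +
          ((Finset.range (k - s)).image (fun d => outC k n a L d)).card :=
        Finset.card_union_le _ _
      _ ≤ min k s + (Finset.range (k - s)).card := by
        gcongr
        · exact outForb_card _ _ _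
        · exact Finset.card_image_le
      _ ≤ k := by rw [Finset.card_range]; omega
  have hs := pick_spec k n a L hcard ((2*k+4)*(k+1) - 1 - s)
    (outForb k (tcolC k n a L) s ∪
      (Finset.range (k - s)).image (fun d => outC k n a L d)) hcardu
  rw [← he] at hs
  refine ⟨hs.1, ?_, ?_⟩
  · intro d h1 h2 heq
    exact hs.2 (Finset.mem_union_left _ (heq ▸ mem_outForb d h1 h2))
  · intro d hd heq
    apply hs.2
    apply Finset.mem_union_right
    rw [Finset.mem_image]
    exact ⟨d, Finset.mem_range.mpr hd, heq.symm⟩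


lemma surjOn_of_injOn (k : ℕ) (f : ℕ → ℕ) (hb : ∀ r ≤ k, f r ≤ k)
    (hi : ∀ r ≤ k, ∀ r' ≤ k, f r = f r' → r = r') :
    ∀ v ≤ k, ∃ r, r ≤ k ∧ f r = v := by
  classical
  have himg : (Finset.range (k+1)).image f = Finset.range (k+1) := by
    apply Finset.eq_of_subset_of_card_le
    · intro v hv
      simp only [Finset.mem_image, Finset.mem_range] at *
      obtain ⟨r, hr, rfl⟩ := hv
      exact Nat.lt_succ_of_le (hb r (Nat.lt_succ_iff.mp hr))
    · rw [Finset.card_image_of_injOn, Finset.card_range]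
      intro r hr r' hr' h
      exact hi r (Nat.lt_succ_iff.mp (Finset.mem_range.mp hr))
        r' (Nat.lt_succ_iff.mp (Finset.mem_range.mp hr')) h
  intro v hv
  have : v ∈ (Finset.range (k+1)).image f := by
    rw [himg]; exact Finset.mem_range.mpr (Nat.lt_succ_of_le hv)
  obtain ⟨r, hr, hfr⟩ := Finset.mem_image.mp this
  exact ⟨r, Nat.lt_succ_iff.mp (Finset.mem_range.mp hr), hfr⟩

lemma eq_id_of_strictMono (k : ℕ) (f : ℕ → ℕ) (hb : ∀ x ≤ k, f x ≤ k)
    (hm : ∀ x y, x ≤ k → y ≤ k → x < y → f x < f y) :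
    ∀ x ≤ k, f x = x := by
  have lower : ∀ x ≤ k, x ≤ f x := by
    intro x
    induction x with
    | zero => omega
    | succ m ih =>
      intro h
      have h1 := hm m (m+1) (by omega) h (by omega)
      have h2 := ih (by omega)
      omega
  have upper : ∀ s x, x + s = k → f x ≤ x := by
    intro s
    induction s with
    | zero => intro x h; have := hb x (by omega); omega
    | succ m ih =>
      intro x h
      have h1 := hm x (x+1) (by omega) (by omega) (by omega)
      have h2 := ih (x+1) (by omega)
      omega
  intro x hx
  have := upper (k - x) x (by omega)
  have := lower x hx
  omega

theorem plan_exists (k : ℕ) (σ τ : ℕ → ℕ)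
    (hσb : ∀ r ≤ k, σ r ≤ k) (hσi : ∀ r ≤ k, ∀ r' ≤ k, σ r = σ r' → r = r')
    (hτb : ∀ r ≤ k, τ r ≤ k) (hτi : ∀ r ≤ k, ∀ r' ≤ k, τ r = τ r' → r = r') :
    ∃ (W : ℕ → ℕ → ℕ) (j q : ℕ → ℕ),
      W 0 = σ ∧ (∀ r ≤ k, W (k+1) r = τ r) ∧
      (∀ i ≤ k, j i ≤ k ∧ q i ≤ j i ∧ W i (j i) = i ∧
        (∀ r ≤ k, W (i+1) r =
          if r < q i then W i r else if r = q i then i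
          else if r ≤ j i then W i (r-1) else W i r)) ∧
      (∀ i ≤ k+1, ∀ r ≤ k, W i r ≤ k) ∧
      (∀ i ≤ k+1, ∀ r ≤ k, ∀ r' ≤ k, W i r = W i r' → r = r') := by
  classical
  have hτsurj := surjOn_of_injOn k τ hτb hτi
  set τinv : ℕ → ℕ := fun v => if h : ∃ r, r ≤ k ∧ τ r = v then h.choose else 0 with hτinvdef
  have hτinv1 : ∀ v ≤ k, τinv v ≤ k ∧ τ (τinv v) = v := by
    intro v hv
    have h := hτsurj v hv
    simp only [hτinvdef]
    rw [dif_pos h]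
    exact ⟨h.choose_spec.1, h.choose_spec.2⟩
  have hτinvinj : ∀ v ≤ k, ∀ v' ≤ k, τinv v = τinv v' → v = v' := by
    intro v hv v' hv' h
    have h1 := hτinv1 v hv
    have h2 := hτinv1 v' hv'
    rw [← h1.2, ← h2.2, h]
  have main : ∀ i, i ≤ k+1 → ∃ (W : ℕ → ℕ → ℕ) (j q : ℕ → ℕ),
      W 0 = σ ∧
      (∀ m, m < i → j m ≤ k ∧ q m ≤ j m ∧ W m (j m) = m ∧
        (∀ r ≤ k, W (m+1) r =
          if r < q m then W m r else if r = q m then m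
          else if r ≤ j m then W m (r-1) else W m r)) ∧
      (∀ m ≤ i, ∀ r ≤ k, W m r ≤ k) ∧
      (∀ m ≤ i, ∀ r ≤ k, ∀ r' ≤ k, W m r = W m r' → r = r') ∧
      (∀ rc ≤ k, ∀ rx ≤ k, W i rc < i → rx < rc → τinv (W i rx) < τinv (W i rc)) := by
    intro i
    induction i with
    | zero =>
      intro _
      exact ⟨fun _ => σ, fun _ => 0, fun _ => 0, rfl,
        fun m hm => absurd hm (Nat.not_lt_zero m), fun _ _ => hσb,
        fun _ _ => hσi, fun rc _ rx _ h _ => absurd h (Nat.not_lt_zero _)⟩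
    | succ i ih =>
      intro hik
      obtain ⟨W, j, q, hW0, hplan, hb, hinj, hInv⟩ := ih (by omega)
      have hik' : i ≤ k := by omega
      have hbi := hb i le_rfl
      have hinji := hinj i le_rfl
      obtain ⟨jj, hjjk, hjji⟩ := surjOn_of_injOn k (W i) hbi hinji i hik'
      have hqqpack : ∃ qq, qq ≤ jj ∧ (∀ rx, rx < qq → τinv (W i rx) < τinv i) ∧
          (∀ r ≤ k, W i r < i → τinv (W i r) < τinv i → r < qq) := by
        set B := (Finset.range (k+1)).filter
          (fun r => W i r < i ∧ τinv (W i r) < τinv i) with hBdef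
        have hBmem : ∀ r, r ∈ B ↔ r ≤ k ∧ W i r < i ∧ τinv (W i r) < τinv i := by
          intro r
          simp only [hBdef, Finset.mem_filter, Finset.mem_range, Nat.lt_succ_iff]
        by_cases hBne : B.Nonempty
        · refine ⟨B.max' hBne + 1, ?_, ?_, ?_⟩
          · have hmB := B.max'_mem hBne
            rw [hBmem] at hmB
            obtain ⟨hm1, hm2, hm3⟩ := hmB
            rcases Nat.lt_trichotomy (B.max' hBne) jj with h | h | h
            · omega
            · rw [h, hjji] at hm2; omega
            · have h4 := hInv (B.max' hBne) hm1 jj hjjk hm2 h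
              rw [hjji] at h4; omega
          · intro rx hrx
            have hmB := B.max'_mem hBne
            rw [hBmem] at hmB
            obtain ⟨hm1, hm2, hm3⟩ := hmB
            have hrxm : rx ≤ B.max' hBne := by omega
            rcases eq_or_lt_of_le hrxm with h | h
            · rw [h]; exact hm3
            · exact lt_trans (hInv _ hm1 rx (by omega) hm2 h) hm3
          · intro r hr h1 h2
            have hrB : r ∈ B := by rw [hBmem]; exact ⟨hr, h1, h2⟩
            have := B.le_max' r hrB; omega
        · refine ⟨0, Nat.zero_le _, fun rx h => absurd h (Nat.not_lt_zero _), ?_⟩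
          intro r hr h1 h2
          exact absurd ((hBmem r).mpr ⟨hr, h1, h2⟩) (fun h => hBne ⟨r, h⟩)
      obtain ⟨qq, K3, K1, K2⟩ := hqqpack
      set W' : ℕ → ℕ := fun r =>
        if r < qq then W i r else if r = qq then i
        else if r ≤ jj then W i (r-1) else W i r with hW'def
      set onew : ℕ → ℕ := fun r =>
        if r < qq then r else if r = qq then jj
        else if r ≤ jj then r - 1 else r with honewdef
      have hW'o : ∀ r, W' r = W i (onew r) := by
        intro r
        rw [hW'def, honewdef]
        simp only []
        split_ifs with h1 h2 h3
        · rfl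
        · exact hjji.symm
        · rfl
        · rfl
      have honb : ∀ r ≤ k, onew r ≤ k := by
        intro r hr
        rw [honewdef]
        simp only []
        split_ifs <;> omega
      have honinj : ∀ r ≤ k, ∀ r' ≤ k, onew r = onew r' → r = r' := by
        intro r hr r' hr' h
        rw [honewdef] at h
        simp only [] at h
        split_ifs at h <;> omega
      have honne : ∀ r, r ≠ qq → onew r ≠ jj := by
        intro r hr
        rw [honewdef]
        simp only []
        split_ifs <;> omega
      have hW'b : ∀ r ≤ k, W' r ≤ k := by
        intro r hr
        rw [hW'o]
        exact hbi (onew r) (honb r hr)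
      have hW'inj : ∀ r ≤ k, ∀ r' ≤ k, W' r = W' r' → r = r' := by
        intro r hr r' hr' h
        rw [hW'o, hW'o] at h
        exact honinj r hr r' hr' (hinji (onew r) (honb r hr) (onew r') (honb r' hr') h)
      have hW'nei : ∀ r ≤ k, r ≠ qq → W' r ≠ i := by
        intro r hr hne h
        rw [hW'o] at h
        exact honne r hne (hinji (onew r) (honb r hr) jj hjjk (h.trans hjji.symm))
      have hW'qq : W' qq = i := by
        rw [hW'def]
        simp
      have hInv' : ∀ rc ≤ k, ∀ rx ≤ k, W' rc < i+1 → rx < rc →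
          τinv (W' rx) < τinv (W' rc) := by
        intro rc hrc rx hrx hlt hxr
        rcases eq_or_ne rc qq with hcq | hcq
        · have hrxq : rx < qq := by omega
          have hWrx : W' rx = W i rx := by
            rw [hW'def]; simp only []; rw [if_pos hrxq]
          rw [hcq, hW'qq, hWrx]
          exact K1 rx hrxq
        · have hci : W' rc ≠ i := hW'nei rc hrc hcq
          have hc : W' rc < i := by omega
          rcases eq_or_ne rx qq with hxq | hxq
          · rw [hxq, hW'qq]
            by_contra hcon
            push_neg at hcon
            have hne2 : τinv (W' rc) ≠ τinv i :=
              fun h => hci (hτinvinj (W' rc) (hW'b rc hrc) i hik' h)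
            have h2 : τinv (W' rc) < τinv i := by omega
            have h3 := K2 (onew rc) (honb rc hrc) (by rw [← hW'o]; exact hc)
              (by rw [← hW'o]; exact h2)
            have h4 : qq ≤ onew rc := by
              rw [honewdef]; simp only []
              split_ifs <;> omega
            omega
          · have hmono : onew rx < onew rc := by
              rw [honewdef]; simp only []
              split_ifs <;> omega
            rw [hW'o, hW'o]
            exact hInv (onew rc) (honb rc hrc) (onew rx) (honb rx hrx)
              (by rw [← hW'o]; exact hc) hmono
      classical
      refine ⟨Function.update W (i+1) W',
        Function.update j i jj,
        Function.update q i qq, ?_, ?_, ?_, ?_, ?_⟩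
      · rw [Function.update_of_ne (by omega)]; exact hW0
      · intro m hm
        rcases eq_or_ne m i with rfl | hne
        · rw [Function.update_self, Function.update_self,
            Function.update_self, Function.update_of_ne (by omega)]
          exact ⟨hjjk, K3, hjji, fun r _ => by rw [hW'def]⟩
        · rw [Function.update_of_ne hne, Function.update_of_ne hne,
            Function.update_of_ne (show m ≠ i + 1 by omega),
            Function.update_of_ne (show m + 1 ≠ i + 1 by omega)]
          exact hplan m (by omega)
      · intro m hm r hr
        rcases eq_or_ne m (i+1) with rfl | hne
        · rw [Function.update_self]; exact hW'b r hr
        · rw [Function.update_of_ne hne]; exact hb m (by omega) r hr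
      · intro m hm r hr r' hr'
        rcases eq_or_ne m (i+1) with rfl | hne
        · rw [Function.update_self]; exact hW'inj r hr r' hr'
        · rw [Function.update_of_ne hne]; exact hinj m (by omega) r hr r' hr'
      · rw [Function.update_self]
        intro rc hrc rx hrx hlt hxr
        exact hInv' rc hrc rx hrx hlt hxr
  obtain ⟨W, j, q, hW0, hplan, hb, hinj, hInv⟩ := main (k+1) le_rfl
  refine ⟨W, j, q, hW0, ?_, fun i hi => hplan i (by omega), hb, hinj⟩
  have hmono : ∀ x ≤ k, ∀ y ≤ k, x < y → τinv (W (k+1) x) < τinv (W (k+1) y) := by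
    intro x hx y hy hxy
    exact hInv y hy x hx (by have := hb (k+1) le_rfl y hy; omega) hxy
  have hfb : ∀ x ≤ k, τinv (W (k+1) x) ≤ k := by
    intro x hx
    exact (hτinv1 (W (k+1) x) (hb (k+1) le_rfl x hx)).1
  have hid := eq_id_of_strictMono k (fun x => τinv (W (k+1) x)) hfb
    (fun x y hx hy h => hmono x hx y hy h)
  intro r hr
  have h1 := hid r hr
  have h2 := (hτinv1 (W (k+1) r) (hb (k+1) le_rfl r hr)).2
  rw [h1] at h2
  exact h2.symm


/-- Segment colour at block `b`, residue `r` (both relative to segment start). -/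
def Sg (k : ℕ) (W : ℕ → ℕ → ℕ) (j q : ℕ → ℕ) (b r : ℕ) : ℕ :=
  if b = 0 then W 0 r
  else if b = 2*k+3 then W (k+1) r
  else if b % 2 = 1 then (if r = j ((b-1)/2) then k+1 else W ((b-1)/2) r)
  else (if r < q (b/2-1) then W (b/2-1) r else if r = q (b/2-1) then (b/2-1)
        else W (b/2) r)

lemma block_shape (k b : ℕ) (hb : b ≤ 2*k+3) :
    b = 0 ∨ b = 2*k+3 ∨ (∃ i, i ≤ k ∧ b = 2*i+1) ∨ (∃ i, i ≤ k ∧ b = 2*i+2) := by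
  by_cases h1 : b = 0
  · exact .inl h1
  by_cases h2 : b = 2*k+3
  · exact .inr (.inl h2)
  by_cases h3 : b % 2 = 1
  · exact .inr (.inr (.inl ⟨(b-1)/2, by omega, by omega⟩))
  · exact .inr (.inr (.inr ⟨b/2-1, by omega, by omega⟩))

section SEG

variable {k : ℕ} {W : ℕ → ℕ → ℕ} {j q : ℕ → ℕ}
variable (hjk : ∀ i ≤ k, j i ≤ k) (hqj : ∀ i ≤ k, q i ≤ j i)
  (hWj : ∀ i ≤ k, W i (j i) = i)
  (hstep : ∀ i ≤ k, ∀ r ≤ k, W (i+1) r =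
    if r < q i then W i r else if r = q i then i
    else if r ≤ j i then W i (r-1) else W i r)
  (hWb : ∀ i ≤ k+1, ∀ r ≤ k, W i r ≤ k)
  (hWinj : ∀ i ≤ k+1, ∀ r ≤ k, ∀ r' ≤ k, W i r = W i r' → r = r')

lemma Sg_zero (r : ℕ) : Sg k W j q 0 r = W 0 r := by
  unfold Sg; rw [if_pos rfl]

lemma Sg_last (r : ℕ) : Sg k W j q (2*k+3) r = W (k+1) r := by
  unfold Sg; rw [if_neg (by omega), if_pos rfl]

lemma Sg_odd (i r : ℕ) (hi : i ≤ k) :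
    Sg k W j q (2*i+1) r = if r = j i then k+1 else W i r := by
  unfold Sg
  rw [if_neg (by omega), if_neg (by omega), if_pos (by omega)]
  have e : (2*i+1-1)/2 = i := by omega
  rw [e]

lemma Sg_even (i r : ℕ) (hi : i ≤ k) :
    Sg k W j q (2*i+2) r =
      if r < q i then W i r else if r = q i then i else W (i+1) r := by
  unfold Sg
  rw [if_neg (by omega), if_neg (by omega), if_neg (by omega)]
  have e : (2*i+2)/2-1 = i := by omega
  have e2 : (2*i+2)/2 = i+1 := by omega
  rw [e, e2]

include hstep in
lemma Wsucc_lt {i r : ℕ} (hi : i ≤ k) (hr : r ≤ k) (h : r < q i) :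
    W (i+1) r = W i r := by
  rw [hstep i hi r hr, if_pos h]

include hstep hqj hjk in
lemma Wsucc_eq {i : ℕ} (hi : i ≤ k) : W (i+1) (q i) = i := by
  have h1 := hqj i hi
  have h2 := hjk i hi
  rw [hstep i hi (q i) (by omega), if_neg (by omega), if_pos rfl]

include hstep in
lemma Wsucc_gt {i r : ℕ} (hi : i ≤ k) (hr : r ≤ k) (h : q i < r) :
    W (i+1) r = if r ≤ j i then W i (r-1) else W i r := by
  rw [hstep i hi r hr, if_neg (by omega), if_neg (by omega)]

include hWinj in
lemma W_ne {i r r' : ℕ} (hi : i ≤ k+1) (hr : r ≤ k) (hr' : r' ≤ k) (hne : r ≠ r') :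
    W i r ≠ W i r' :=
  fun h2 => hne (hWinj i hi r hr r' hr' h2)

include hWinj hWj hjk in
lemma W_eq_i {i r : ℕ} (hi : i ≤ k) (hr : r ≤ k) : W i r = i ↔ r = j i := by
  constructor
  · intro h
    exact hWinj i (by omega) r hr (j i) (hjk i hi) (h.trans (hWj i hi).symm)
  · intro h; rw [h]; exact hWj i hi

include hjk hqj hWj hstep hWb hWinj in
lemma Sg_same (b r r' : ℕ) (hb : b ≤ 2*k+3) (hr : r ≤ k) (hr' : r' ≤ k)
    (hlt : r < r') : Sg k W j q b r ≠ Sg k W j q b r' := by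
  rcases block_shape k b hb with rfl | rfl | ⟨i, hi, rfl⟩ | ⟨i, hi, rfl⟩
  · rw [Sg_zero, Sg_zero]; exact W_ne hWinj (by omega) hr hr' (by omega)
  · rw [Sg_last, Sg_last]; exact W_ne hWinj (by omega) hr hr' (by omega)
  · rw [Sg_odd _ _ hi, Sg_odd _ _ hi]
    by_cases h1 : r = j i
    · rw [if_pos h1, if_neg (show ¬ r' = j i by omega)]
      intro h; have := hWb i (by omega) r' hr'; omega
    · rw [if_neg h1]
      by_cases h2 : r' = j i
      · rw [if_pos h2]; intro h; have := hWb i (by omega) r hr; omega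
      · rw [if_neg h2]; exact W_ne hWinj (by omega) hr hr' (by omega)
  · rw [Sg_even _ _ hi, Sg_even _ _ hi]
    have hq := hqj i hi
    have hj := hjk i hi
    by_cases h1 : r < q i
    · rw [if_pos h1]
      by_cases h2 : r' < q i
      · rw [if_pos h2]; exact W_ne hWinj (by omega) hr hr' (by omega)
      · rw [if_neg h2]
        by_cases h3 : r' = q i
        · rw [if_pos h3]
          intro h
          have := (W_eq_i hjk hWj hWinj hi hr).mp h
          omega
        · rw [if_neg h3, Wsucc_gt hstep hi hr' (by omega)]
          by_cases h4 : r' ≤ j i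
          · rw [if_pos h4]; exact W_ne hWinj (by omega) hr (by omega) (by omega)
          · rw [if_neg h4]; exact W_ne hWinj (by omega) hr hr' (by omega)
    · rw [if_neg h1]
      by_cases h3 : r = q i
      · rw [if_pos h3, if_neg (show ¬ r' < q i by omega),
          if_neg (show ¬ r' = q i by omega), Wsucc_gt hstep hi hr' (by omega)]
        by_cases h4 : r' ≤ j i
        · rw [if_pos h4]
          intro h
          have := (W_eq_i hjk hWj hWinj hi (show r'-1 ≤ k by omega)).mp h.symm
          omega
        · rw [if_neg h4]
          intro h
          have := (W_eq_i hjk hWj hWinj hi hr').mp h.symm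
          omega
      · rw [if_neg h3, if_neg (show ¬ r' < q i by omega),
          if_neg (show ¬ r' = q i by omega)]
        rw [Wsucc_gt hstep hi hr (by omega), Wsucc_gt hstep hi hr' (by omega)]
        by_cases h4 : r ≤ j i
        · rw [if_pos h4]
          by_cases h5 : r' ≤ j i
          · rw [if_pos h5]
            exact W_ne hWinj (by omega) (by omega) (by omega) (by omega)
          · rw [if_neg h5]
            exact W_ne hWinj (by omega) (by omega) hr' (by omega)
        · rw [if_neg h4, if_neg (show ¬ r' ≤ j i by omega)]
          exact W_ne hWinj (by omega) hr hr' (by omega)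

include hjk hqj hWj hstep hWb hWinj in
lemma Sg_adj (b r r' : ℕ) (hb : b + 1 ≤ 2*k+3) (hr : r ≤ k) (hr' : r' ≤ k)
    (hlt : r' < r) : Sg k W j q b r ≠ Sg k W j q (b+1) r' := by
  rcases block_shape k b (by omega) with rfl | rfl | ⟨i, hi, rfl⟩ | ⟨i, hi, rfl⟩
  · rw [Sg_zero]
    have e : (0:ℕ)+1 = 2*0+1 := by omega
    rw [e, Sg_odd _ _ (by omega)]
    by_cases h1 : r' = j 0
    · rw [if_pos h1]; intro h; have := hWb 0 (by omega) r hr; omega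
    · rw [if_neg h1]; exact W_ne hWinj (by omega) hr hr' (by omega)
  · exact absurd hb (by omega)
  · have e : 2*i+1+1 = 2*i+2 := by omega
    rw [Sg_odd _ _ hi, e, Sg_even _ _ hi]
    have hq := hqj i hi
    have hj := hjk i hi
    by_cases h1 : r = j i
    · rw [if_pos h1]
      by_cases h2 : r' < q i
      · rw [if_pos h2]; intro h; have := hWb i (by omega) r' hr'; omega
      · rw [if_neg h2]
        by_cases h3 : r' = q i
        · rw [if_pos h3]; omega
        · rw [if_neg h3]; intro h; have := hWb (i+1) (by omega) r' hr'; omega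
    · rw [if_neg h1]
      by_cases h2 : r' < q i
      · rw [if_pos h2]; exact W_ne hWinj (by omega) hr hr' (by omega)
      · rw [if_neg h2]
        by_cases h3 : r' = q i
        · rw [if_pos h3]; intro h
          have := (W_eq_i hjk hWj hWinj hi hr).mp h
          omega
        · rw [if_neg h3, Wsucc_gt hstep hi hr' (by omega)]
          by_cases h4 : r' ≤ j i
          · rw [if_pos h4]; exact W_ne hWinj (by omega) hr (by omega) (by omega)
          · rw [if_neg h4]; exact W_ne hWinj (by omega) hr hr' (by omega)
  · have hq := hqj i hi
    have hj := hjk i hi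
    rw [Sg_even _ _ hi]
    by_cases hik : i = k
    · subst hik
      have e : 2*i+2+1 = 2*i+3 := by omega
      rw [e]
      have hlast : Sg i W j q (2*i+3) r' = W (i+1) r' := Sg_last r'
      rw [hlast]
      by_cases h1 : r < q i
      · rw [if_pos h1, ← Wsucc_lt hstep le_rfl hr h1]
        exact W_ne hWinj (by omega) hr hr' (by omega)
      · by_cases h3 : r = q i
        · rw [if_neg h1, if_pos h3]
          intro h
          have h2 : W (i+1) (q i) = W (i+1) r' := by
            rw [Wsucc_eq hjk hqj hstep le_rfl]; exact h
          have := hWinj (i+1) (by omega) (q i) (by omega) r' hr' h2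
          omega
        · rw [if_neg h1, if_neg h3]
          exact W_ne hWinj (by omega) hr hr' (by omega)
    · have hik' : i+1 ≤ k := by omega
      have e : 2*i+2+1 = 2*(i+1)+1 := by omega
      rw [e, Sg_odd _ _ hik']
      by_cases h5 : r' = j (i+1)
      · rw [if_pos h5]
        by_cases h1 : r < q i
        · rw [if_pos h1]; intro h; have := hWb i (by omega) r hr; omega
        · by_cases h3 : r = q i
          · rw [if_neg (by omega), if_pos h3]; omega
          · rw [if_neg (by omega), if_neg h3]
            intro h; have := hWb (i+1) (by omega) r hr; omega
      · rw [if_neg h5]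
        by_cases h1 : r < q i
        · rw [if_pos h1, ← Wsucc_lt hstep hi hr h1]
          exact W_ne hWinj (by omega) hr hr' (by omega)
        · by_cases h3 : r = q i
          · rw [if_neg (by omega), if_pos h3]
            intro h
            have h2 : W (i+1) (q i) = W (i+1) r' := by
              rw [Wsucc_eq hjk hqj hstep hi]; exact h
            have := hWinj (i+1) (by omega) (q i) (by omega) r' hr' h2
            omega
          · rw [if_neg (by omega), if_neg h3]
            exact W_ne hWinj (by omega) hr hr' (by omega)

include hWb in
lemma Sg_le_zero (r : ℕ) (hr : r ≤ k) : Sg k W j q 0 r ≤ k := by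
  rw [Sg_zero]; exact hWb 0 (by omega) r hr

include hWb in
lemma Sg_le_last (r : ℕ) (hr : r ≤ k) : Sg k W j q (2*k+3) r ≤ k := by
  rw [Sg_last]; exact hWb (k+1) (by omega) r hr

include hWb in
lemma Sg_le_even (i r : ℕ) (hi : i ≤ k) (hr : r ≤ k) :
    Sg k W j q (2*i+2) r ≤ k := by
  rw [Sg_even _ _ hi]
  by_cases h1 : r < q i
  · rw [if_pos h1]; exact hWb i (by omega) r hr
  · rw [if_neg h1]
    by_cases h2 : r = q i
    · rw [if_pos h2]; omega
    · rw [if_neg h2]; exact hWb (i+1) (by omega) r hr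

include hWb in
lemma Sg_le_all (b r : ℕ) (hb : b ≤ 2*k+3) (hr : r ≤ k) :
    Sg k W j q b r ≤ k+1 := by
  rcases block_shape k b hb with rfl | rfl | ⟨i, hi, rfl⟩ | ⟨i, hi, rfl⟩
  · have := Sg_le_zero (j:=j) (q:=q) hWb r hr; omega
  · have := Sg_le_last (j:=j) (q:=q) hWb r hr; omega
  · rw [Sg_odd _ _ hi]
    by_cases h1 : r = j i
    · rw [if_pos h1]
    · rw [if_neg h1]; have := hWb i (by omega) r hr; omega
  · have := Sg_le_even (j:=j) (q:=q) hWb i r hi hr; omega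

include hjk hWj hWb hWinj in
lemma Sg_odd_ne (i r : ℕ) (hi : i ≤ k) (hr : r ≤ k) :
    Sg k W j q (2*i+1) r ≠ i := by
  rw [Sg_odd _ _ hi]
  by_cases h1 : r = j i
  · rw [if_pos h1]; omega
  · rw [if_neg h1]
    intro h
    have := (W_eq_i hjk hWj hWinj hi hr).mp h
    omega

end SEG

lemma seg_decomp (k p : ℕ) (hp : p < (2*k+4)*(k+1)) :
    ∃ b r, b ≤ 2*k+3 ∧ r ≤ k ∧ p = (k+1)*b + r := by
  refine ⟨p/(k+1), p%(k+1), ?_, ?_, ?_⟩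
  · by_contra hc
    push_neg at hc
    have h1 : 2*k+4 ≤ p/(k+1) := by omega
    have h2 : (k+1)*(2*k+4) ≤ (k+1)*(p/(k+1)) := Nat.mul_le_mul_left _ h1
    have h3 := Nat.div_add_mod p (k+1)
    have h4 : (k+1)*(2*k+4) = (2*k+4)*(k+1) := by ring
    omega
  · have := Nat.mod_lt p (y := k+1) (by omega)
    omega
  · have h3 := Nat.div_add_mod p (k+1)
    omega

theorem colourable_of_good_segment (k n : ℕ)
    (hn : 2 * ((k+1)^2 + (k+1)) + 2*k ≤ n) (a : Fin n)
    (L : Fin n → Finset (Fin (k+2))) (hcard : ∀ v, (L v).card = k + 1)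
    (hfirst : ∀ j ≤ k, L (rot a j) = Finset.univ.erase (Fin.last (k+1)))
    (hlast : ∀ j ≤ k,
      L (rot a (2*(k+1)^2 + (k+1) + j)) = Finset.univ.erase (Fin.last (k+1)))
    (hpair1 : ∀ i : Fin (k+1), ∀ j ≤ k,
      L (rot a ((k+1) + i.val*(2*(k+1)) + j)) =
        Finset.univ.erase (i.castSucc : Fin (k+2)))
    (hpair2 : ∀ i : Fin (k+1), ∀ j ≤ k,
      L (rot a ((k+1) + i.val*(2*(k+1)) + (k+1) + j)) =
        Finset.univ.erase (Fin.last (k+1))) :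
    colourable (cyclePower n k) L := by

  classical
  rw [pow_two] at hn
  have hkk : 0 < (k+1)*(k+1) := Nat.mul_pos (Nat.succ_pos k) (Nat.succ_pos k)
  have hMv1 : (2*k+4)*(k+1) = 2*((k+1)*(k+1) + (k+1)) := by ring
  have hnM : (2*k+4)*(k+1) + 2*k ≤ n := by omega
  have hn0 : 0 < n := by omega
  -- outside greedy facts
  have hout_mem : ∀ s, outC k n a L s ∈ L (rot a ((2*k+4)*(k+1) + s)) :=
    fun s => (outC_spec k n a L hcard s).1
  have hout_ne : ∀ s d, 1 ≤ d → d ≤ k → d ≤ s →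
      outC k n a L s ≠ outC k n a L (s - d) :=
    fun s d h1 h2 h3 => (outC_spec k n a L hcard s).2 d h1 (by omega)
  have htcol_mem : ∀ s, tcolC k n a L s ∈ L (rot a ((2*k+4)*(k+1) - 1 - s)) :=
    fun s => (tcolC_spec k n a L hcard s).1
  have htcol_ne : ∀ s d, 1 ≤ d → d ≤ k → d ≤ s →
      tcolC k n a L s ≠ tcolC k n a L (s - d) :=
    fun s d h1 h2 h3 => (tcolC_spec k n a L hcard s).2.1 d h1 (by omega)
  have htcol_ne_out : ∀ s d, d < k - s → tcolC k n a L s ≠ outC k n a L d :=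
    fun s d hd => (tcolC_spec k n a L hcard s).2.2 d hd
  -- list hypotheses, rewritten
  have hpair1' : ∀ i (hi : i ≤ k) (r : ℕ) (_ : r ≤ k),
      L (rot a ((k+1)*(2*i+1) + r)) =
        Finset.univ.erase ((⟨i, by omega⟩ : Fin (k+1)).castSucc) := by
    intro i hi r hr
    have e : (k+1)*(2*i+1) + r = (k+1) + i*(2*(k+1)) + r := by ring
    rw [e]
    exact hpair1 ⟨i, by omega⟩ r hr
  have hpair2' : ∀ i, i ≤ k → ∀ r, r ≤ k →
      L (rot a ((k+1)*(2*i+2) + r)) = Finset.univ.erase (Fin.last (k+1)) := by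
    intro i hi r hr
    have e : (k+1)*(2*i+2) + r = (k+1) + i*(2*(k+1)) + (k+1) + r := by ring
    rw [e]
    exact hpair2 ⟨i, by omega⟩ r hr
  have hlast' : ∀ r, r ≤ k → L (rot a ((k+1)*(2*k+3) + r)) =
      Finset.univ.erase (Fin.last (k+1)) := by
    intro r hr
    have e : (k+1)*(2*k+3) + r = 2*(k+1)^2 + (k+1) + r := by ring
    rw [e]
    exact hlast r hr
  -- the sigma word
  have hrot_first : ∀ r, rot a ((2*k+4)*(k+1) + (n - (2*k+4)*(k+1) + r)) = rot a r := by
    intro r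
    apply rot_congr'
    rw [show (2*k+4)*(k+1) + (n - (2*k+4)*(k+1) + r) = n + r from by omega,
      Nat.add_mod_left]
  set σw : ℕ → ℕ := fun r => (outC k n a L (n - (2*k+4)*(k+1) + r)).val with hσdef
  set τw : ℕ → ℕ := fun r => (tcolC k n a L (k - r)).val with hτdef
  have hσb : ∀ r, r ≤ k → σw r ≤ k := by
    intro r hr
    have hm := hout_mem (n - (2*k+4)*(k+1) + r)
    rw [hrot_first r, hfirst r hr] at hm
    have h2 := Finset.mem_erase.mp hm
    have h3 : (outC k n a L (n - (2*k+4)*(k+1) + r)).val ≠ k+1 := by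
      intro hx
      exact h2.1 (Fin.ext (by rw [hx, Fin.val_last]))
    have h4 := (outC k n a L (n - (2*k+4)*(k+1) + r)).isLt
    simp only [hσdef]
    omega
  have hσi : ∀ r, r ≤ k → ∀ r', r' ≤ k → σw r = σw r' → r = r' := by
    intro r hr r' hr' h
    by_contra hne
    simp only [hσdef] at h
    rcases Nat.lt_or_ge r r' with hlt | hge
    · apply hout_ne (n - (2*k+4)*(k+1) + r') (r' - r) (by omega) (by omega) (by omega)
      rw [show n - (2*k+4)*(k+1) + r' - (r' - r) = n - (2*k+4)*(k+1) + r from by omega]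
      exact Fin.ext h.symm
    · apply hout_ne (n - (2*k+4)*(k+1) + r) (r - r') (by omega) (by omega) (by omega)
      rw [show n - (2*k+4)*(k+1) + r - (r - r') = n - (2*k+4)*(k+1) + r' from by omega]
      exact Fin.ext h
  have hτpos : ∀ r, r ≤ k → (2*k+4)*(k+1) - 1 - (k - r) = (k+1)*(2*k+3) + r := by
    intro r hr
    have e : (2*k+4)*(k+1) = (k+1)*(2*k+3) + (k+1) := by ring
    omega
  have hτb : ∀ r, r ≤ k → τw r ≤ k := by
    intro r hr
    have hm := htcol_mem (k - r)
    rw [hτpos r hr, hlast' r hr] at hm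
    have h2 := Finset.mem_erase.mp hm
    have h3 : (tcolC k n a L (k - r)).val ≠ k+1 := by
      intro hx
      exact h2.1 (Fin.ext (by rw [hx, Fin.val_last]))
    have h4 := (tcolC k n a L (k - r)).isLt
    simp only [hτdef]
    omega
  have hτi : ∀ r, r ≤ k → ∀ r', r' ≤ k → τw r = τw r' → r = r' := by
    intro r hr r' hr' h
    by_contra hne
    simp only [hτdef] at h
    rcases Nat.lt_or_ge r r' with hlt | hge
    · apply htcol_ne (k - r) (r' - r) (by omega) (by omega) (by omega)
      rw [show k - r - (r' - r) = k - r' from by omega]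
      exact Fin.ext h
    · apply htcol_ne (k - r') (r - r') (by omega) (by omega) (by omega)
      rw [show k - r' - (r - r') = k - r from by omega]
      exact Fin.ext h.symm
  -- the plan
  obtain ⟨W, wj, wq, hW0, hWfin, hplan, hWb, hWinj⟩ := plan_exists k σw τw hσb hσi hτb hτi
  have hjk : ∀ i ≤ k, wj i ≤ k := fun i hi => (hplan i hi).1
  have hqj : ∀ i ≤ k, wq i ≤ wj i := fun i hi => (hplan i hi).2.1
  have hWj : ∀ i ≤ k, W i (wj i) = i := fun i hi => (hplan i hi).2.2.1
  have hstep : ∀ i ≤ k, ∀ r ≤ k, W (i+1) r =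
      if r < wq i then W i r else if r = wq i then i
      else if r ≤ wj i then W i (r-1) else W i r :=
    fun i hi => (hplan i hi).2.2.2
  -- the global colouring (on offsets)
  have hSle : ∀ p, p < (2*k+4)*(k+1) → Sg k W wj wq (p/(k+1)) (p%(k+1)) ≤ k+1 := by
    intro p hp
    obtain ⟨b, r, hb, hr, rfl⟩ := seg_decomp k p hp
    have hdiv : ((k+1)*b + r) / (k+1) = b := by
      rw [show (k+1)*b + r = r + b*(k+1) from by ring,
        Nat.add_mul_div_right _ _ (by omega : 0 < k+1), Nat.div_eq_of_lt (by omega)]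
      omega
    have hmod : ((k+1)*b + r) % (k+1) = r := by
      rw [show (k+1)*b + r = r + b*(k+1) from by ring,
        Nat.add_mul_mod_self_right]
      exact Nat.mod_eq_of_lt (by omega)
    rw [hdiv, hmod]
    exact Sg_le_all hWb b r hb hr
  set g : ℕ → Fin (k+2) := fun p =>
    if h : p < (2*k+4)*(k+1) then
      ⟨Sg k W wj wq (p/(k+1)) (p%(k+1)), by have := hSle p h; omega⟩
    else outC k n a L (p - (2*k+4)*(k+1)) with hgdef
  have hg_seg : ∀ b r, b ≤ 2*k+3 → r ≤ k →
      (k+1)*b + r < (2*k+4)*(k+1) ∧ (g ((k+1)*b + r)).val = Sg k W wj wq b r := by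
    intro b r hb hr
    have h1 : (k+1)*b ≤ (k+1)*(2*k+3) := Nat.mul_le_mul_left _ hb
    have h2 : (2*k+4)*(k+1) = (k+1)*(2*k+3) + (k+1) := by ring
    have hlt : (k+1)*b + r < (2*k+4)*(k+1) := by omega
    refine ⟨hlt, ?_⟩
    have hdiv : ((k+1)*b + r) / (k+1) = b := by
      rw [show (k+1)*b + r = r + b*(k+1) from by ring,
        Nat.add_mul_div_right _ _ (by omega : 0 < k+1), Nat.div_eq_of_lt (by omega)]
      omega
    have hmod : ((k+1)*b + r) % (k+1) = r := by
      rw [show (k+1)*b + r = r + b*(k+1) from by ring,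
        Nat.add_mul_mod_self_right]
      exact Nat.mod_eq_of_lt (by omega)
    simp only [hgdef]
    rw [dif_pos hlt]
    show Sg k W wj wq (((k+1)*b + r)/(k+1)) (((k+1)*b + r)%(k+1)) = Sg k W wj wq b r
    rw [hdiv, hmod]
  have hg_out : ∀ p, (2*k+4)*(k+1) ≤ p → g p = outC k n a L (p - (2*k+4)*(k+1)) := by
    intro p hp
    simp only [hgdef]
    rw [dif_neg (by omega)]
  -- membership
  have hg_mem : ∀ p, p < n → g p ∈ L (rot a p) := by
    intro p hp
    by_cases hseg : p < (2*k+4)*(k+1)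
    · obtain ⟨b, r, hb, hr, rfl⟩ := seg_decomp k p hseg
      have hgv := (hg_seg b r hb hr).2
      rcases block_shape k b hb with rfl | rfl | ⟨i, hi, rfl⟩ | ⟨i, hi, rfl⟩
      · rw [show (k+1)*0 + r = r from by ring] at hgv ⊢
        have he : g r = outC k n a L (n - (2*k+4)*(k+1) + r) := by
          apply Fin.ext
          rw [hgv, Sg_zero, hW0]
        rw [he, ← hrot_first r]
        exact hout_mem _
      · have he : g ((k+1)*(2*k+3) + r) = tcolC k n a L (k - r) := by
          apply Fin.ext
          rw [hgv, Sg_last, hWfin r hr]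
        rw [he]
        have hm := htcol_mem (k - r)
        rw [hτpos r hr] at hm
        exact hm
      · rw [hpair1' i hi r hr, Finset.mem_erase]
        refine ⟨?_, Finset.mem_univ _⟩
        intro he
        have hval := congrArg Fin.val he
        rw [hgv] at hval
        have hcs : ((⟨i, by omega⟩ : Fin (k+1)).castSucc : Fin (k+2)).val = i := rfl
        rw [hcs] at hval
        exact Sg_odd_ne hjk hWj hWb hWinj i r hi hr hval
      · rw [hpair2' i hi r hr, Finset.mem_erase]
        refine ⟨?_, Finset.mem_univ _⟩
        intro he
        have hval := congrArg Fin.val he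
        rw [hgv, Fin.val_last] at hval
        have := Sg_le_even (j := wj) (q := wq) hWb i r hi hr
        omega
    · rw [hg_out p (by omega)]
      have hm := hout_mem (p - (2*k+4)*(k+1))
      rw [show (2*k+4)*(k+1) + (p - (2*k+4)*(k+1)) = p from by omega] at hm
      exact hm
  -- properness on offsets
  have hkey : ∀ t, t < n → ∀ d, 1 ≤ d → d ≤ k → g t ≠ g ((t + d) % n) := by
    intro t ht d hd1 hdk
    by_cases hw : t + d < n
    · rw [Nat.mod_eq_of_lt hw]
      by_cases hseg : t < (2*k+4)*(k+1)
      · by_cases hseg2 : t + d < (2*k+4)*(k+1)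
        · obtain ⟨b, r, hb, hr, hpe⟩ := seg_decomp k t hseg
          by_cases hrd : r + d ≤ k
          · have h1 := (hg_seg b r hb hr).2
            rw [← hpe] at h1
            have h2 := (hg_seg b (r+d) hb hrd).2
            rw [← show t + d = (k+1)*b + (r+d) from by omega] at h2
            intro hceq
            have hv := congrArg Fin.val hceq
            rw [h1, h2] at hv
            exact Sg_same hjk hqj hWj hstep hWb hWinj b r (r+d) hb hr hrd
              (by omega) hv
          · have hb1 : b + 1 ≤ 2*k+3 := by
              by_contra hc
              push_neg at hc
              have h1 : (k+1)*(2*k+3) ≤ (k+1)*b := Nat.mul_le_mul_left _ (by omega)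
              have h2 : (2*k+4)*(k+1) = (k+1)*(2*k+3) + (k+1) := by ring
              omega
            have hpe2 : t + d = (k+1)*(b+1) + (r + d - (k+1)) := by
              have e : (k+1)*(b+1) = (k+1)*b + (k+1) := by ring
              omega
            have h1 := (hg_seg b r hb hr).2
            rw [← hpe] at h1
            have h2 := (hg_seg (b+1) (r + d - (k+1)) hb1 (by omega)).2
            rw [← hpe2] at h2
            intro hceq
            have hv := congrArg Fin.val hceq
            rw [h1, h2] at hv
            exact Sg_adj hjk hqj hWj hstep hWb hWinj b r (r + d - (k+1)) hb1 hr
              (by omega) (by omega) hv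
        · have h2 : (2*k+4)*(k+1) = (k+1)*(2*k+3) + (k+1) := by ring
          have hr1 : 1 ≤ t - (k+1)*(2*k+3) ∧ t - (k+1)*(2*k+3) ≤ k := by omega
          have hpe : t = (k+1)*(2*k+3) + (t - (k+1)*(2*k+3)) := by omega
          have hgv := (hg_seg (2*k+3) (t - (k+1)*(2*k+3)) le_rfl hr1.2).2
          rw [← hpe] at hgv
          have hv2 : g t = tcolC k n a L (k - (t - (k+1)*(2*k+3))) := by
            apply Fin.ext
            rw [hgv, Sg_last, hWfin _ hr1.2]
          rw [hv2, hg_out (t+d) (by omega)]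
          exact htcol_ne_out (k - (t - (k+1)*(2*k+3))) (t + d - (2*k+4)*(k+1))
            (by omega)
      · rw [hg_out t (by omega), hg_out (t+d) (by omega)]
        intro hceq
        apply hout_ne (t + d - (2*k+4)*(k+1)) d hd1 hdk (by omega)
        rw [show t + d - (2*k+4)*(k+1) - d = t - (2*k+4)*(k+1) from by omega]
        exact hceq.symm
    · have hmod : (t + d) % n = t + d - n := by
        rw [Nat.mod_eq_sub_mod (by omega)]
        exact Nat.mod_eq_of_lt (by omega)
      rw [hmod]
      have htMv : (2*k+4)*(k+1) ≤ t := by omega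
      rw [hg_out t htMv]
      have hgv := (hg_seg 0 (t + d - n) (by omega) (by omega)).2
      rw [show (k+1)*0 + (t + d - n) = t + d - n from by ring] at hgv
      have he : g (t + d - n) = outC k n a L (n - (2*k+4)*(k+1) + (t + d - n)) := by
        apply Fin.ext
        rw [hgv, Sg_zero, hW0]
      rw [he]
      intro hceq
      apply hout_ne (n - (2*k+4)*(k+1) + (t + d - n)) d hd1 hdk (by omega)
      rw [show n - (2*k+4)*(k+1) + (t + d - n) - d = t - (2*k+4)*(k+1) from by omega]
      exact hceq.symm
  -- conclusion
  refine ⟨fun v => g ((v.val + n - a.val) % n), ?_, ?_⟩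
  · intro v
    have h1 : (v.val + n - a.val) % n < n := Nat.mod_lt _ hn0
    have h2 := hg_mem _ h1
    rw [rot_inv'] at h2
    exact h2
  · intro v w hadj
    obtain ⟨hvw, hdist⟩ := hadj
    unfold cycleDist at hdist
    have hvn := v.isLt
    have hwn := w.isLt
    have han := a.isLt
    have hYpos : 0 < (w.val + n - v.val) % n := by
      rw [mod_two_cases hn0 (w.val + n - v.val) (by omega)]
      split_ifs with hc
      · omega
      · by_contra h0
        push_neg at h0
        exact hvw (Fin.ext (by omega : v.val = w.val))
    have hXpos : 0 < (v.val + n - w.val) % n := by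
      rw [mod_two_cases hn0 (v.val + n - w.val) (by omega)]
      split_ifs with hc
      · omega
      · by_contra h0
        push_neg at h0
        exact hvw (Fin.ext (by omega : v.val = w.val))
    by_cases hY : (w.val + n - v.val) % n ≤ k
    · have h1 : (v.val + n - a.val) % n < n := Nat.mod_lt _ hn0
      have hkey2 := hkey _ h1 ((w.val + n - v.val) % n) hYpos hY
      rw [offs_add hn0 a.val v.val w.val han hvn hwn] at hkey2
      exact hkey2
    · have hX : (v.val + n - w.val) % n ≤ k := by omega
      have h1 : (w.val + n - a.val) % n < n := Nat.mod_lt _ hn0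
      have hkey2 := hkey _ h1 ((v.val + n - w.val) % n) hXpos hX
      rw [offs_add hn0 a.val w.val v.val han hwn hvn] at hkey2
      exact hkey2.symm
end
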